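/- arXiv:1604.01902 — 4 statements merged into one kernel-verified Lean document; each statement's English description precedes it below -/
import Mathlib

section
/- Let E/F be a quadratic field extension, and let r, m ∈ ℕ and t ∈ E^×. Then ι_r(t) ∈ GL₂(𝔬)·a(ϖ^m)·GL₂(𝔬) if and only if t ∈ 𝒪_r^{(m)}, i.e. ι_r^{−1}(GL₂(𝔬) a(ϖ^m) GL₂(𝔬)) = 𝒪_r^{(m)}. -/
/-! By the Cartan decomposition, a matrix `g ∈ M₂(F)` lies in `GL₂(𝔬) a(d) GL₂(𝔬)` exactly when
its entries are integral, one of them is a unit and `det g ∈ d 𝔬^×`; the unit entry is moved to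
the corner by the swap matrix, and with a unit corner the factorization is explicit.

Writing `t = x + ϖ^r y β`, the relation `x·(β,1) = (β,1)·ι₀(x)` and `β² = 𝐛β − 𝐚` give
`ι_r(t) = [[x + ϖ^r y 𝐛, ϖ^{2r} y], [−𝐚 y, x]]`, whose determinant is `Nr(t)`. Since `𝐚` is a unit,
its entries are integral iff `x, y ∈ 𝔬`, i.e. `t ∈ 𝒪_r`, and one of them is then a unit iff `x` or
`y` is, i.e. `t ∉ ϖ𝒪_r`. -/

/-- `a(y) = diag(y, 1)`. -/
def aM {F : Type*} [Field F] (y : F) : Matrix (Fin 2) (Fin 2) F := !![y, 0; 0, 1]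

/-- `GL₂(𝔬)`: matrices with entries in `𝔬` whose inverse also has entries in `𝔬`. -/
def GLo {F : Type*} [Field F] (o : ValuationSubring F) :
    Set (Matrix (Fin 2) (Fin 2) F) :=
  {g | (∀ i j, g i j ∈ o) ∧
    ∃ h : Matrix (Fin 2) (Fin 2) F, (∀ i j, h i j ∈ o) ∧ g * h = 1 ∧ h * g = 1}

/-- The order `𝒪_r = 𝔬 + ϖ^rβ𝔬 ⊆ E` of conductor `r`. -/
def OrE {F E : Type*} [Field F] [Field E] [Algebra F E] (o : ValuationSubring F)
    (ϖ : F) (β : E) (r : ℕ) : Set E :=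
  {z | ∃ x y : F, x ∈ o ∧ y ∈ o ∧
    z = algebraMap F E x + algebraMap F E (ϖ ^ r * y) * β}

section GLo

variable {F : Type*} [Field F] {o : ValuationSubring F}

open Matrix

theorem ValuationSubring.valuation_eq_one_iff_mem_inv_mem {x : F} :
    o.valuation x = 1 ↔ x ∈ o ∧ x⁻¹ ∈ o ∧ x ≠ 0 := by
  simp only [← o.valuation_le_one_iff, map_inv₀]
  constructor
  · intro h
    exact ⟨h.le, by rw [h, inv_one], fun h0 => by simp [h0] at h⟩
  · rintro ⟨h, hinv, h0⟩
    have hpos : 0 < o.valuation x := by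
      rw [zero_lt_iff]; exact (Valuation.ne_zero_iff _).mpr h0
    exact le_antisymm h ((inv_le_one₀ hpos).mp hinv)

theorem Matrix.mul_apply_mem_valuationSubring {l n p : Type*} [Fintype n]
    {g : Matrix l n F} {h : Matrix n p F} (hg : ∀ i j, g i j ∈ o) (hh : ∀ i j, h i j ∈ o)
    (i : l) (j : p) : (g * h) i j ∈ o :=
  sum_mem fun k _ => mul_mem (hg i k) (hh k j)

theorem Matrix.valuation_mul_apply_lt_one_of_left {l n p : Type*} [Fintype n]
    {g : Matrix l n F} {h : Matrix n p F} (hg : ∀ i j, o.valuation (g i j) < 1)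
    (hh : ∀ i j, h i j ∈ o) (i : l) (j : p) : o.valuation ((g * h) i j) < 1 :=
  Valuation.map_sum_lt _ one_ne_zero fun k _ => by
    rw [map_mul, mul_comm]
    exact Right.mul_lt_one_of_le_of_lt ((o.valuation_le_one_iff _).mpr (hh k j)) (hg i k)

theorem Matrix.valuation_mul_apply_lt_one_of_right {l n p : Type*} [Fintype n]
    {g : Matrix l n F} {h : Matrix n p F} (hg : ∀ i j, g i j ∈ o)
    (hh : ∀ i j, o.valuation (h i j) < 1) (i : l) (j : p) : o.valuation ((g * h) i j) < 1 :=
  Valuation.map_sum_lt _ one_ne_zero fun k _ => by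
    rw [map_mul]
    exact Right.mul_lt_one_of_le_of_lt ((o.valuation_le_one_iff _).mpr (hg i k)) (hh k j)

theorem Matrix.det_mem_valuationSubring {k : Matrix (Fin 2) (Fin 2) F} (hk : ∀ i j, k i j ∈ o) :
    k.det ∈ o := by
  rw [det_fin_two]
  exact sub_mem (mul_mem (hk 0 0) (hk 1 1)) (mul_mem (hk 0 1) (hk 1 0))

theorem mem_GLo_iff {k : Matrix (Fin 2) (Fin 2) F} :
    k ∈ GLo o ↔ (∀ i j, k i j ∈ o) ∧ o.valuation k.det = 1 := by
  constructor
  · rintro ⟨hk, h, hh, hkh, -⟩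
    have hdet : o.valuation k.det * o.valuation h.det = 1 := by
      rw [← map_mul, ← det_mul, hkh, det_one, map_one]
    refine ⟨hk, le_antisymm ((o.valuation_le_one_iff _).mpr (det_mem_valuationSubring hk)) ?_⟩
    calc 1 = o.valuation k.det * o.valuation h.det := hdet.symm
      _ ≤ o.valuation k.det :=
        mul_le_of_le_one_right' ((o.valuation_le_one_iff _).mpr (det_mem_valuationSubring hh))
  · rintro ⟨hk, hdet⟩
    obtain ⟨-, hinv, hne⟩ := ValuationSubring.valuation_eq_one_iff_mem_inv_mem.mp hdet
    refine ⟨hk, k.det⁻¹ • k.adjugate, fun i j => ?_, ?_, ?_⟩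
    · rw [adjugate_fin_two]
      fin_cases i <;> fin_cases j <;> simp [mul_mem hinv, hk]
    · rw [Matrix.mul_smul, mul_adjugate, smul_smul, inv_mul_cancel₀ hne, one_smul]
    · rw [Matrix.smul_mul, adjugate_mul, smul_smul, inv_mul_cancel₀ hne, one_smul]

theorem mul_mem_GLo {k₁ k₂ : Matrix (Fin 2) (Fin 2) F} (h₁ : k₁ ∈ GLo o) (h₂ : k₂ ∈ GLo o) :
    k₁ * k₂ ∈ GLo o := by
  rw [mem_GLo_iff] at *
  refine ⟨mul_apply_mem_valuationSubring h₁.1 h₂.1, ?_⟩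
  rw [det_mul, map_mul, h₁.2, h₂.2, one_mul]

theorem swap_mul_swap : (!![0, 1; 1, 0] : Matrix (Fin 2) (Fin 2) F) * !![0, 1; 1, 0] = 1 := by
  simp [one_fin_two]

theorem swap_mem_GLo : !![0, 1; 1, 0] ∈ GLo o := by
  refine mem_GLo_iff.mpr ⟨fun i j => ?_, by simp⟩
  fin_cases i <;> fin_cases j <;> simp [zero_mem, one_mem]

end GLo

section DoubleCoset

variable {F : Type*} [Field F] {o : ValuationSubring F} {d : F}

open Matrix

def GLoDoubleCoset (o : ValuationSubring F) (d : F) : Set (Matrix (Fin 2) (Fin 2) F) :=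
  {g | ∃ k₁ ∈ GLo o, ∃ k₂ ∈ GLo o, g = k₁ * aM d * k₂}

namespace GLoDoubleCoset

theorem mul_mem_of_mem_GLo_left {k g : Matrix (Fin 2) (Fin 2) F} (hk : k ∈ GLo o)
    (hg : g ∈ GLoDoubleCoset o d) : k * g ∈ GLoDoubleCoset o d := by
  obtain ⟨k₁, h₁, k₂, h₂, rfl⟩ := hg
  exact ⟨k * k₁, mul_mem_GLo hk h₁, k₂, h₂, by simp only [mul_assoc]⟩

theorem mul_mem_of_mem_GLo_right {k g : Matrix (Fin 2) (Fin 2) F} (hk : k ∈ GLo o)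
    (hg : g ∈ GLoDoubleCoset o d) : g * k ∈ GLoDoubleCoset o d := by
  obtain ⟨k₁, h₁, k₂, h₂, rfl⟩ := hg
  exact ⟨k₁, h₁, k₂ * k, mul_mem_GLo h₂ hk, by simp only [mul_assoc]⟩

theorem of_valuation_apply_zero_zero {g : Matrix (Fin 2) (Fin 2) F} (hg : ∀ i j, g i j ∈ o)
    (h00 : o.valuation (g 0 0) = 1) {u : F} (hu : o.valuation u = 1) (hdet : g.det = d * u) :
    g ∈ GLoDoubleCoset o d := by
  obtain ⟨-, hα, hα0⟩ := ValuationSubring.valuation_eq_one_iff_mem_inv_mem.mp h00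
  obtain ⟨huo, -, hu0⟩ := ValuationSubring.valuation_eq_one_iff_mem_inv_mem.mp hu
  refine ⟨!![0, g 0 0; u * (g 0 0)⁻¹, g 1 0], mem_GLo_iff.mpr ⟨fun i j => ?_, ?_⟩,
    !![0, 1; 1, g 0 1 * (g 0 0)⁻¹], mem_GLo_iff.mpr ⟨fun i j => ?_, ?_⟩, ?_⟩
  · fin_cases i <;> fin_cases j <;> simp [hg, mul_mem huo hα]
  · simp [det_fin_two_of, hα0, hu]
  · fin_cases i <;> fin_cases j <;> simp [mul_mem (hg 0 1) hα]
  · simp [det_fin_two_of]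
  · rw [det_fin_two] at hdet
    ext i j
    fin_cases i <;> fin_cases j <;> simp [aM, Matrix.mul_apply, Fin.sum_univ_two]
    all_goals field_simp
    all_goals linear_combination hdet

theorem of_exists_valuation_apply_zero_eq_one {g : Matrix (Fin 2) (Fin 2) F}
    (hg : ∀ i j, g i j ∈ o) (h0 : ∃ j, o.valuation (g 0 j) = 1) {u : F}
    (hu : o.valuation u = 1) (hdet : g.det = d * u) : g ∈ GLoDoubleCoset o d := by
  obtain ⟨j, hj⟩ := h0
  fin_cases j
  · exact of_valuation_apply_zero_zero hg hj hu hdet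
  · have hgS : g * !![0, 1; 1, 0] ∈ GLoDoubleCoset o d := by
      refine of_valuation_apply_zero_zero (u := -u) (fun i j => ?_)
        (by simpa [mul_apply] using hj) (by simpa using hu)
        (by rw [det_mul, hdet, det_fin_two_of]; ring)
      fin_cases i <;> fin_cases j <;> simp [mul_apply, hg]
    have := mul_mem_of_mem_GLo_right swap_mem_GLo hgS
    rwa [mul_assoc, swap_mul_swap, mul_one] at this

theorem of_exists_valuation_apply_eq_one {g : Matrix (Fin 2) (Fin 2) F}
    (hg : ∀ i j, g i j ∈ o) (h : ∃ i j, o.valuation (g i j) = 1) {u : F}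
    (hu : o.valuation u = 1) (hdet : g.det = d * u) : g ∈ GLoDoubleCoset o d := by
  obtain ⟨i, hi⟩ := h
  fin_cases i
  · exact of_exists_valuation_apply_zero_eq_one hg hi hu hdet
  · have hSg : !![0, 1; 1, 0] * g ∈ GLoDoubleCoset o d := by
      refine of_exists_valuation_apply_zero_eq_one (u := -u) (fun i j => ?_)
        (by simpa [mul_apply] using hi) (by simpa using hu)
        (by rw [det_mul, hdet, det_fin_two_of]; ring)
      fin_cases i <;> fin_cases j <;> simp [mul_apply, hg]
    have := mul_mem_of_mem_GLo_left swap_mem_GLo hSg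
    rwa [← mul_assoc, swap_mul_swap, one_mul] at this

end GLoDoubleCoset

theorem mem_GLoDoubleCoset_iff (hd : d ∈ o) {g : Matrix (Fin 2) (Fin 2) F} :
    g ∈ GLoDoubleCoset o d ↔ (∀ i j, g i j ∈ o) ∧ (∃ i j, o.valuation (g i j) = 1) ∧
      ∃ u, o.valuation u = 1 ∧ g.det = d * u := by
  refine ⟨?_, fun ⟨hg, hunit, u, hu, hdet⟩ => GLoDoubleCoset.of_exists_valuation_apply_eq_one
    hg hunit hu hdet⟩
  rintro ⟨k₁, hk₁, k₂, hk₂, rfl⟩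
  have haM : ∀ i j, aM d i j ∈ o := fun i j => by
    fin_cases i <;> fin_cases j <;> simp [aM, hd]
  have hg := mul_apply_mem_valuationSubring (mul_apply_mem_valuationSubring hk₁.1 haM) hk₂.1
  refine ⟨hg, ?_, k₁.det * k₂.det, ?_, ?_⟩
  · -- otherwise all entries of `aM d = k₁⁻¹ * g * k₂⁻¹` would lie in the maximal ideal
    obtain ⟨-, h₁, hh₁, -, hh₁k₁⟩ := hk₁
    obtain ⟨-, h₂, hh₂, hk₂h₂, -⟩ := hk₂
    by_contra! hunit
    have hlt : ∀ i j, o.valuation ((k₁ * aM d * k₂) i j) < 1 := fun i j =>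
      lt_of_le_of_ne ((o.valuation_le_one_iff _).mpr (hg i j)) (hunit i j)
    have h11 := valuation_mul_apply_lt_one_of_left
      (valuation_mul_apply_lt_one_of_right hh₁ hlt) hh₂ 1 1
    rw [show h₁ * (k₁ * aM d * k₂) * h₂ = aM d by
      simp only [← mul_assoc, hh₁k₁, one_mul]; rw [mul_assoc, hk₂h₂, mul_one]] at h11
    simp [aM] at h11
  · rw [map_mul, (mem_GLo_iff.mp hk₁).2, (mem_GLo_iff.mp hk₂).2, one_mul]
  · rw [det_mul, det_mul, aM, det_fin_two_of]
    ring

end DoubleCoset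

section Quadratic

variable {F E : Type*} [Field F] [Field E] [Algebra F E] {β : E}

theorem eq_and_eq_of_algebraMap_add_mul_eq (hβ : β ∉ Set.range (algebraMap F E))
    {x y x' y' : F}
    (h : algebraMap F E x + algebraMap F E y * β = algebraMap F E x' + algebraMap F E y' * β) :
    x = x' ∧ y = y' := by
  obtain rfl : y = y' := by
    by_contra hne
    have hne' : algebraMap F E (y - y') ≠ 0 := (map_ne_zero _).mpr (sub_ne_zero.mpr hne)
    refine hβ ⟨(x' - x) / (y - y'), ?_⟩
    rw [map_div₀, div_eq_iff hne', map_sub, map_sub]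
    linear_combination -h
  exact ⟨(algebraMap F E).injective (add_right_cancel h), rfl⟩

noncomputable def basisPair (hβ : β ∉ Set.range (algebraMap F E))
    (hspan : ∀ z : E, ∃ x y : F, z = algebraMap F E x + algebraMap F E y * β) :
    Module.Basis (Fin 2) F E :=
  .mk (v := ![β, 1])
    (LinearIndependent.pair_iff.mpr fun s t hst => by
      have := eq_and_eq_of_algebraMap_add_mul_eq hβ (x := t) (y := s) (x' := 0) (y' := 0)
        (by simpa [Algebra.smul_def, add_comm] using hst)
      exact ⟨this.2, this.1⟩)
    (fun z _ => by
      obtain ⟨x, y, rfl⟩ := hspan z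
      rw [Matrix.range_cons, Matrix.range_cons, Matrix.range_empty, Set.union_empty,
        Set.singleton_union, Submodule.mem_span_pair]
      exact ⟨y, x, by simp [Algebra.smul_def, add_comm]⟩)

theorem coe_basisPair (hβ : β ∉ Set.range (algebraMap F E))
    (hspan : ∀ z : E, ∃ x y : F, z = algebraMap F E x + algebraMap F E y * β) :
    ⇑(basisPair hβ hspan) = ![β, 1] := Module.Basis.coe_mk _ _

theorem Algebra.norm_eq_det_of_mul_basis {ι : Type*} [Fintype ι] [DecidableEq ι]
    (bE : Module.Basis ι F E) (A : E → Matrix ι ι F)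
    (hA : ∀ x j, x * bE j = ∑ i, bE i * algebraMap F E (A x i j)) (x : E) :
    Algebra.norm F x = (A x).det := by
  rw [Algebra.norm_eq_matrix_det bE]
  congr 1
  ext i j
  simp_rw [Algebra.leftMulMatrix_eq_repr_mul, hA, mul_comm (bE _), ← Algebra.smul_def,
    bE.repr_sum_self]

theorem iota_algebraMap_add_mul (hβ : β ∉ Set.range (algebraMap F E)) {a b : F}
    (hmin : β ^ 2 - algebraMap F E b * β + algebraMap F E a = 0)
    {ι₀ : E → Matrix (Fin 2) (Fin 2) F}
    (hι₀ : ∀ x j, x * ![β, 1] j = ∑ i, ![β, 1] i * algebraMap F E (ι₀ x i j)) (x y : F) :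
    ι₀ (algebraMap F E x + algebraMap F E y * β) = !![x + y * b, y; -(y * a), x] := by
  generalize ht : algebraMap F E x + algebraMap F E y * β = t
  have hcol₁ := hι₀ t 1
  have hcol₀ := hι₀ t 0
  simp only [Fin.sum_univ_two, Matrix.cons_val_zero, Matrix.cons_val_one, mul_one,
    one_mul] at hcol₀ hcol₁
  obtain ⟨h11, h01⟩ := eq_and_eq_of_algebraMap_add_mul_eq hβ
    (x := x) (y := y) (x' := ι₀ t 1 1) (y' := ι₀ t 0 1) (by rw [ht]; linear_combination hcol₁)
  obtain ⟨h10, h00⟩ := eq_and_eq_of_algebraMap_add_mul_eq hβ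
    (x := -(y * a)) (y := x + y * b) (x' := ι₀ t 1 0) (y' := ι₀ t 0 0) (by
      rw [map_neg, map_mul, map_add, map_mul]
      linear_combination (-algebraMap F E y) * hmin + β * ht + hcol₀)
  ext i j
  fin_cases i <;> fin_cases j <;> simp [← h11, ← h01, ← h10, ← h00]

end Quadratic

section Conjugation

variable {F E : Type*} [Field F] [Field E] [Algebra F E]

open Matrix

theorem aM_mul_mul_aM_inv {c : F} (hc : c ≠ 0) (A : Matrix (Fin 2) (Fin 2) F) :
    aM c * A * aM c⁻¹ = !![A 0 0, c * A 0 1; c⁻¹ * A 1 0, A 1 1] := by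
  rw [eta_fin_two A]
  simp only [aM, mul_fin_two]
  congr 1
  simp [hc, mul_comm]

theorem det_aM_mul_mul_aM_inv {c : F} (hc : c ≠ 0) (A : Matrix (Fin 2) (Fin 2) F) :
    (aM c * A * aM c⁻¹).det = A.det := by
  rw [det_mul, det_mul, aM, aM, det_fin_two_of, det_fin_two_of]
  field_simp
  ring

/-- The matrix of `ι_r(x + ϖ^r y β)`, with `c = ϖ^r`. -/
def iotaMatrix (a b c x y : F) : Matrix (Fin 2) (Fin 2) F :=
  !![x + c * y * b, c * (c * y); -(y * a), x]

theorem aM_mul_iota_mul_aM_inv {β : E} (hβ : β ∉ Set.range (algebraMap F E)) {a b : F}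
    (hmin : β ^ 2 - algebraMap F E b * β + algebraMap F E a = 0)
    {ι₀ : E → Matrix (Fin 2) (Fin 2) F}
    (hι₀ : ∀ x j, x * ![β, 1] j = ∑ i, ![β, 1] i * algebraMap F E (ι₀ x i j))
    {c : F} (hc : c ≠ 0) (x y : F) :
    aM c * ι₀ (algebraMap F E x + algebraMap F E (c * y) * β) * aM c⁻¹ =
      iotaMatrix a b c x y := by
  rw [aM_mul_mul_aM_inv hc, iota_algebraMap_add_mul hβ hmin hι₀, iotaMatrix]
  ext i j
  fin_cases i <;> fin_cases j <;> simp
  field_simp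

end Conjugation

section Integrality

variable {F : Type*} [Field F] {o : ValuationSubring F} {a b c : F}

theorem iotaMatrix_apply_mem_iff (ha : o.valuation a = 1) (hb : b ∈ o) (hc : c ∈ o)
    {x y : F} :
    (∀ i j, iotaMatrix a b c x y i j ∈ o) ↔ x ∈ o ∧ y ∈ o := by
  obtain ⟨hao, hai, ha0⟩ := ValuationSubring.valuation_eq_one_iff_mem_inv_mem.mp ha
  constructor
  · intro h
    refine ⟨by simpa [iotaMatrix] using h 1 1, ?_⟩
    simpa [iotaMatrix, ha0] using mul_mem (h 1 0) (neg_mem hai)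
  · rintro ⟨hx, hy⟩ i j
    fin_cases i <;> fin_cases j
    · exact add_mem hx (mul_mem (mul_mem hc hy) hb)
    · exact mul_mem hc (mul_mem hc hy)
    · exact neg_mem (mul_mem hy hao)
    · exact hx

theorem exists_valuation_iotaMatrix_apply_eq_one_iff (ha : o.valuation a = 1) (hb : b ∈ o)
    (hc : c ∈ o) {x y : F} (hx : x ∈ o) (hy : y ∈ o) :
    (∃ i j, o.valuation (iotaMatrix a b c x y i j) = 1) ↔
      ¬ (o.valuation x < 1 ∧ o.valuation y < 1) := by
  have hle : ∀ {z}, z ∈ o → o.valuation z ≤ 1 := (o.valuation_le_one_iff _).mpr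
  constructor
  · rintro ⟨i, j, hij⟩ ⟨hx1, hy1⟩
    have hcy : o.valuation (c * y) < 1 := by
      rw [map_mul]; exact Right.mul_lt_one_of_le_of_lt (hle hc) hy1
    have hcyb : o.valuation (c * y * b) < 1 := by
      rw [map_mul, mul_comm]; exact Right.mul_lt_one_of_le_of_lt (hle hb) hcy
    have hya : o.valuation (-(y * a)) < 1 := by
      rwa [Valuation.map_neg, map_mul, ha, mul_one]
    have hccy : o.valuation (c * (c * y)) < 1 := by
      rw [map_mul]; exact Right.mul_lt_one_of_le_of_lt (hle hc) hcy
    have hlt : ∀ i j, o.valuation (iotaMatrix a b c x y i j) < 1 := by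
      intro i j
      fin_cases i <;> fin_cases j
      exacts [Valuation.map_add_lt _ hx1 hcyb, hccy, hya, hx1]
    exact (hlt i j).ne hij
  · intro h
    by_cases hx1 : o.valuation x = 1
    · exact ⟨1, 1, by simpa [iotaMatrix] using hx1⟩
    · have hy1 : o.valuation y = 1 := by
        by_contra hy1
        exact h ⟨lt_of_le_of_ne (hle hx) hx1, lt_of_le_of_ne (hle hy) hy1⟩
      exact ⟨1, 0, by simp [iotaMatrix, ha, hy1]⟩

end Integrality

section Order

variable {F E : Type*} [Field F] [Field E] [Algebra F E] {o : ValuationSubring F} {β : E}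
  {ϖ : F} {r : ℕ}

theorem valuation_lt_one_iff_exists_eq_mul [IsDiscreteValuationRing o] (hϖo : ϖ ∈ o)
    (hϖ : Irreducible (⟨ϖ, hϖo⟩ : o)) {x : F} (hx : x ∈ o) :
    o.valuation x < 1 ↔ ∃ w ∈ o, x = ϖ * w := by
  rw [show o.valuation x = o.valuation (⟨x, hx⟩ : o) from rfl,
    ← ValuationSubring.valuation_lt_one_iff,
    (IsDiscreteValuationRing.irreducible_iff_uniformizer _).mp hϖ, Ideal.mem_span_singleton']
  constructor
  · rintro ⟨w, hw⟩
    exact ⟨w, w.2, by rw [mul_comm]; exact congrArg Subtype.val hw.symm⟩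
  · rintro ⟨w, hw, rfl⟩
    exact ⟨⟨w, hw⟩, Subtype.ext (mul_comm _ _)⟩

theorem algebraMap_add_mul_mem_OrE_iff (hβ : β ∉ Set.range (algebraMap F E)) (hϖ : ϖ ≠ 0)
    {x y : F} :
    algebraMap F E x + algebraMap F E (ϖ ^ r * y) * β ∈ OrE o ϖ β r ↔ x ∈ o ∧ y ∈ o := by
  constructor
  · rintro ⟨x', y', hx', hy', h⟩
    obtain ⟨rfl, h'⟩ := eq_and_eq_of_algebraMap_add_mul_eq hβ h
    exact ⟨hx', mul_left_cancel₀ (pow_ne_zero r hϖ) h' ▸ hy'⟩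
  · rintro ⟨hx, hy⟩
    exact ⟨x, y, hx, hy, rfl⟩

theorem exists_mem_OrE_eq_mul_iff [IsDiscreteValuationRing o]
    (hβ : β ∉ Set.range (algebraMap F E)) (hϖo : ϖ ∈ o) (hϖ : Irreducible (⟨ϖ, hϖo⟩ : o))
    {x y : F} (hx : x ∈ o) (hy : y ∈ o) :
    (∃ s ∈ OrE o ϖ β r,
        algebraMap F E x + algebraMap F E (ϖ ^ r * y) * β = algebraMap F E ϖ * s) ↔
      o.valuation x < 1 ∧ o.valuation y < 1 := by
  have hϖ0 : ϖ ≠ 0 := fun h => hϖ.ne_zero (Subtype.ext h)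
  rw [valuation_lt_one_iff_exists_eq_mul hϖo hϖ hx,
    valuation_lt_one_iff_exists_eq_mul hϖo hϖ hy]
  constructor
  · rintro ⟨_, ⟨x', y', hx', hy', rfl⟩, h⟩
    obtain ⟨hxx, hyy⟩ := eq_and_eq_of_algebraMap_add_mul_eq hβ
      (x' := ϖ * x') (y' := ϖ ^ r * (ϖ * y')) (by rw [h]; simp only [map_mul]; ring)
    exact ⟨⟨x', hx', hxx⟩, ⟨y', hy', mul_left_cancel₀ (pow_ne_zero r hϖ0) hyy⟩⟩
  · rintro ⟨⟨x', hx', rfl⟩, ⟨y', hy', rfl⟩⟩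
    exact ⟨_, ⟨x', y', hx', hy', rfl⟩, by simp only [map_mul]; ring⟩

end Order

theorem stmt_9_general {F E : Type*} [Field F] [Field E] [Algebra F E]
    (o : ValuationSubring F) [IsDiscreteValuationRing o]
    (O : ValuationSubring E)
    (hcomp : ∀ x : F, x ∈ o ↔ algebraMap F E x ∈ O)
    (ϖ : F) (hϖo : ϖ ∈ o) (hϖ : Irreducible (⟨ϖ, hϖo⟩ : o))
    (β : E) (hβO : β ∈ O) (hβno : ¬ ∃ x ∈ o, β = algebraMap F E x)
    (hquad : ∀ z : E, ∃ s t : F, z = algebraMap F E s + algebraMap F E t * β)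
    (a b : F) (hao : a ∈ o) (hbo : b ∈ o) (hau : a⁻¹ ∈ o) (hane : a ≠ 0)
    (hmin : β ^ 2 - algebraMap F E b * β + algebraMap F E a = 0)
    (ι₀ : E →+* Matrix (Fin 2) (Fin 2) F)
    (hι₀ : ∀ x : E, ∀ j : Fin 2,
      x * (![β, 1] j) = ∑ i : Fin 2, (![β, 1] i) * algebraMap F E (ι₀ x i j))
    (r m : ℕ) :
    ∀ t : E, t ≠ 0 →
      ((∃ k₁ ∈ GLo o, ∃ k₂ ∈ GLo o,
          aM (ϖ ^ r) * ι₀ t * aM ((ϖ ^ r)⁻¹) = k₁ * aM (ϖ ^ m) * k₂) ↔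
        (t ∈ OrE o ϖ β r ∧ (¬ ∃ s ∈ OrE o ϖ β r, t = algebraMap F E ϖ * s) ∧
          ∃ u : F, u ∈ o ∧ u⁻¹ ∈ o ∧ u ≠ 0 ∧ Algebra.norm F t = ϖ ^ m * u)) := by
  intro t _
  have hβ : β ∉ Set.range (algebraMap F E) := fun ⟨x, hx⟩ =>
    hβno ⟨x, (hcomp x).mpr (hx ▸ hβO), hx.symm⟩
  have hϖ0 : ϖ ≠ 0 := fun h => hϖ.ne_zero (Subtype.ext h)
  have hc : ϖ ^ r ≠ 0 := pow_ne_zero r hϖ0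
  have ha : o.valuation a = 1 :=
    ValuationSubring.valuation_eq_one_iff_mem_inv_mem.mpr ⟨hao, hau, hane⟩
  obtain ⟨x, u, rfl⟩ := hquad t
  obtain ⟨y, rfl⟩ : ∃ y, u = ϖ ^ r * y := ⟨u / ϖ ^ r, by field_simp⟩
  have hnorm : Algebra.norm F (algebraMap F E x + algebraMap F E (ϖ ^ r * y) * β) =
      (iotaMatrix a b (ϖ ^ r) x y).det := by
    rw [← aM_mul_iota_mul_aM_inv hβ hmin hι₀ hc, det_aM_mul_mul_aM_inv hc,
      Algebra.norm_eq_det_of_mul_basis (basisPair hβ hquad) ι₀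
        (by simpa [coe_basisPair] using hι₀)]
  refine (mem_GLoDoubleCoset_iff (pow_mem hϖo m)).trans ?_
  rw [aM_mul_iota_mul_aM_inv hβ hmin hι₀ hc, iotaMatrix_apply_mem_iff ha hbo (pow_mem hϖo r),
    algebraMap_add_mul_mem_OrE_iff hβ hϖ0, hnorm]
  refine and_congr_right fun ⟨hx, hy⟩ => and_congr ?_ ?_
  · rw [exists_valuation_iotaMatrix_apply_eq_one_iff ha hbo (pow_mem hϖo r) hx hy,
      exists_mem_OrE_eq_mul_iff hβ hϖo hϖ hx hy]
  · simp only [ValuationSubring.valuation_eq_one_iff_mem_inv_mem, and_assoc]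

/-- For `r, m ∈ ℕ` and `t ∈ E^×`:
`ι_r(t) ∈ GL₂(𝔬)·a(ϖ^m)·GL₂(𝔬)` if and only if `t ∈ 𝒪_r^{(m)}`, i.e.
`ι_r^{−1}(GL₂(𝔬) a(ϖ^m) GL₂(𝔬)) = 𝒪_r^{(m)}`. -/
theorem stmt_9 {F E : Type*} [Field F] [Field E] [Algebra F E]
    (o : ValuationSubring F) [IsDiscreteValuationRing o]
    (O : ValuationSubring E) [IsDiscreteValuationRing O]
    (hcomp : ∀ x : F, x ∈ o ↔ algebraMap F E x ∈ O)
    (ϖ : F) (hϖo : ϖ ∈ o) (hϖ : Irreducible (⟨ϖ, hϖo⟩ : o))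
    (β : E) (hβO : β ∈ O) (hβno : ¬ ∃ x ∈ o, β = algebraMap F E x)
    (hOgen : ∀ z ∈ O, ∃ x y : F, x ∈ o ∧ y ∈ o ∧
      z = algebraMap F E x + algebraMap F E y * β)
    (hquad : ∀ z : E, ∃ s t : F, z = algebraMap F E s + algebraMap F E t * β)
    (a b : F) (hao : a ∈ o) (hbo : b ∈ o) (hau : a⁻¹ ∈ o) (hane : a ≠ 0)
    (hmin : β ^ 2 - algebraMap F E b * β + algebraMap F E a = 0)
    (ι₀ : E →+* Matrix (Fin 2) (Fin 2) F)
    (hι₀ : ∀ x : E, ∀ j : Fin 2,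
      x * (![β, 1] j) = ∑ i : Fin 2, (![β, 1] i) * algebraMap F E (ι₀ x i j))
    (r m : ℕ) :
    ∀ t : E, t ≠ 0 →
      ((∃ k₁ ∈ GLo o, ∃ k₂ ∈ GLo o,
          aM (ϖ ^ r) * ι₀ t * aM ((ϖ ^ r)⁻¹) = k₁ * aM (ϖ ^ m) * k₂) ↔
        (t ∈ OrE o ϖ β r ∧ (¬ ∃ s ∈ OrE o ϖ β r, t = algebraMap F E ϖ * s) ∧
          ∃ u : F, u ∈ o ∧ u⁻¹ ∈ o ∧ u ≠ 0 ∧ Algebra.norm F t = ϖ ^ m * u)) :=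
  stmt_9_general o O hcomp ϖ hϖo hϖ β hβO hβno hquad a b hao hbo hau hane hmin ι₀ hι₀ r m
end

section
/- Let E/F be a quadratic field extension and c ≥ 1 an integer. If E/F is unramified, then GL₂(𝔬) = K₀(𝔭^c)·ι₀(𝒪^×). If E/F is ramified, then GL₂(𝔬) = K₀(𝔭^c)·ι₀(𝒪^×) ⊔ K₀(𝔭^c)·n₋(u₀)·ι₀(𝒪^×), a disjoint union, where u₀ ∈ 𝔬 ∖ 𝔭 satisfies u₀ ≡ β (mod 𝒫) and 𝐚 − 𝐛u₀ + u₀² ∈ 𝔭 ∖ 𝔭². In both cases the decomposition is independent of c ≥ 1. -/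
/-! `F` a nonarchimedean local field, modelled by a field `F` with valuation ring `o`
(a DVR) and uniformizer `ϖ ∈ o`; `n₋(x) = [[1,0],[x,1]]`,
`K₀(𝔭^c) = {[[a,b],[c,d]] ∈ GL₂(𝔬) : c ∈ 𝔭^c}`.  `E/F` a quadratic field extension
with ring of integers the valuation subring `O` (maximal ideal `𝒫` = nonunits of
`𝒪`); `β ∈ 𝒪 ∖ 𝔬` with `𝒪 = 𝔬 + β𝔬`, `𝐚 := Nr(β) ∈ 𝔬^×`, `𝐛 := Tr(β)` (so
`β² − 𝐛β + 𝐚 = 0`); `ι₀ : E → M₂(F)` is determined by `x·(β,1) = (β,1)·ι₀(x)`, and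
`ι₀(𝒪^×) ⊆ GL₂(𝔬)`.  `E/F` is unramified when `ϖ` stays irreducible in `𝒪`, and
ramified when `ϖ` becomes associated to `ϖ_E²` for a uniformizer `ϖ_E` of `𝒪`. -/

/-- `n₋(x) = [[1,0],[x,1]]`. -/
def nmM {F : Type*} [Field F] (x : F) : Matrix (Fin 2) (Fin 2) F := !![1, 0; x, 1]

/-- `K₀(𝔭^c)`: elements of `GL₂(𝔬)` whose lower-left entry lies in `𝔭^c`. -/
def K0 {F : Type*} [Field F] (o : ValuationSubring F) (ϖ : F) (c : ℕ) :
    Set (Matrix (Fin 2) (Fin 2) F) :=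
  {g | g ∈ GLo o ∧ ∃ d ∈ o, g 1 0 = ϖ ^ c * d}

/-- The unit group `𝒪^×` of the ring of integers of `E` (as a subset of `E`). -/
def Ox {E : Type*} [Field E] (O : ValuationSubring E) : Set E :=
  {z | z ∈ O ∧ ∃ w ∈ O, z * w = 1}

/-! Row vectors of `F²` form a one-dimensional `E`-space under right multiplication by
`ι₀(E)`, with coordinate `(x, y) ↦ x - yβ̄`, which `ι₀(t)` multiplies by `t`.  For
`k ∈ K₀(𝔭^c)` the coordinate of the bottom row of `k n₋(u)` is `k₁₀ + k₁₁·(coordinate of n₋(u))`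
with `k₁₀ ∈ 𝔭` and `k₁₁ ∈ 𝔬^×`, so the valuation of the coordinate separates the double cosets,
and `g ∈ GL₂(𝔬)` lies in that of `n₋(u)` as soon as its coordinate is the one of `n₋(u)` times
a unit of `𝒪`.  Since `𝒪 = 𝔬 ⊕ 𝔬β`, the coordinate of a primitive row is not in `ϖ𝒪`.
Unramified, it is therefore a unit; ramified (`ϖ𝒪 = 𝒫²`), it is a unit or a uniformizer, like
the coordinate `u₀ - β̄` of `n₋(u₀)`: `(β - u₀)(β̄ - u₀) = a - bu₀ + u₀² ∈ ϖ𝔬` while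
`β - u₀ ∉ ϖ𝒪`. -/

section Valuation

variable {K : Type*} [Field K] (A : ValuationSubring K)

theorem mem_Ox_iff_valuation_eq_one {x : K} : x ∈ Ox A ↔ A.valuation x = 1 := by
  constructor
  · rintro ⟨hx, y, hy, hxy⟩
    have hvxy : A.valuation x * A.valuation y = 1 := by rw [← map_mul, hxy, map_one]
    refine le_antisymm ((A.valuation_le_one_iff x).2 hx) (not_lt.1 fun hlt => ?_)
    exact (mul_lt_one_of_lt_of_le hlt ((A.valuation_le_one_iff y).2 hy)).ne hvxy
  · intro hx
    have hx0 : x ≠ 0 := by rintro rfl; simp at hx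
    refine ⟨(A.valuation_le_one_iff x).1 hx.le, x⁻¹, (A.valuation_le_one_iff _).1 ?_,
      mul_inv_cancel₀ hx0⟩
    rw [map_inv₀, hx, inv_one]

theorem exists_mem_Ox_mul_eq_of_valuation_eq {x y : K}
    (h : A.valuation x = A.valuation y) : ∃ t ∈ Ox A, x = y * t := by
  obtain ⟨t, ht⟩ := (A.valuation_eq_iff x y).1 h
  refine ⟨t, ⟨(t : A).2, ((t⁻¹ : Aˣ) : A), ((t⁻¹ : Aˣ) : A).2, ?_⟩, by rw [← ht, mul_comm]⟩
  exact congrArg Subtype.val t.mul_inv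

theorem valuation_eq_of_associated {x y : A} (h : Associated x y) :
    A.valuation (x : K) = A.valuation (y : K) := by
  obtain ⟨u, hu⟩ := h.symm
  exact (A.valuation_eq_iff _ _).2 ⟨u, by rw [← hu, mul_comm]; rfl⟩

variable {A} [IsDiscreteValuationRing A] {π : A}

theorem valuation_le_of_irreducible (hπ : Irreducible π) {x : K} (hx : A.valuation x < 1) :
    A.valuation x ≤ A.valuation (π : K) := by
  have hxA : x ∈ A := (A.valuation_le_one_iff x).1 hx.le
  have hmax : (⟨x, hxA⟩ : A) ∈ IsLocalRing.maximalIdeal A := (A.valuation_lt_one_iff _).2 hx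
  rw [hπ.maximalIdeal_eq, Ideal.mem_span_singleton'] at hmax
  obtain ⟨c, hc⟩ := hmax
  exact (A.valuation_le_iff x π).2 ⟨c, congrArg Subtype.val hc⟩

theorem valuation_eq_of_irreducible (hπ : Irreducible π) {x : K} (hx : A.valuation x < 1)
    (hx2 : A.valuation (π : K) ^ 2 < A.valuation x) : A.valuation x = A.valuation (π : K) := by
  have hπ0 : (π : K) ≠ 0 := fun h0 => hπ.ne_zero (Subtype.ext h0)
  refine le_antisymm (valuation_le_of_irreducible hπ hx) (not_lt.1 fun hlt => hx2.not_ge ?_)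
  rw [← div_mul_cancel₀ x hπ0, map_mul] at hlt ⊢
  have hy : A.valuation (x / π) < 1 :=
    not_le.1 fun h1 => hlt.not_ge (le_mul_of_one_le_left' h1)
  rw [pow_two]
  exact mul_le_mul_left (valuation_le_of_irreducible hπ hy) _


theorem valuation_eq_one_of_irreducible (hπ : Irreducible π) {x : K} (hx : A.valuation x ≤ 1)
    (hπx : A.valuation (π : K) < A.valuation x) : A.valuation x = 1 :=
  hx.eq_of_not_lt fun hlt => (valuation_le_of_irreducible hπ hlt).not_gt hπx

end Valuation

section Matrices

variable {F : Type*} [Field F] {o : ValuationSubring F}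

theorem GLo_mul {g h : Matrix (Fin 2) (Fin 2) F} (hg : g ∈ GLo o) (hh : h ∈ GLo o) :
    g * h ∈ GLo o := by
  obtain ⟨hge, g', hg'e, hgg', hg'g⟩ := hg
  obtain ⟨hhe, h', hh'e, hhh', hh'h⟩ := hh
  refine ⟨fun i j => ?_, h' * g', fun i j => ?_, ?_, ?_⟩
  · rw [Matrix.mul_apply]; exact sum_mem fun k _ => mul_mem (hge i k) (hhe k j)
  · rw [Matrix.mul_apply]; exact sum_mem fun k _ => mul_mem (hh'e i k) (hg'e k j)
  · rw [mul_assoc, ← mul_assoc h, hhh', one_mul, hgg']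
  · rw [mul_assoc, ← mul_assoc g', hg'g, one_mul, hh'h]

theorem nmM_zero : nmM (0 : F) = 1 := by
  ext i j; fin_cases i <;> fin_cases j <;> rfl

theorem nmM_mul_nmM (u u' : F) : nmM u * nmM u' = nmM (u + u') := by
  ext i j; fin_cases i <;> fin_cases j <;> simp [nmM, Matrix.mul_apply, Fin.sum_univ_two, add_comm]

theorem nmM_mem_GLo {u : F} (hu : u ∈ o) : nmM u ∈ GLo o := by
  have hentries : ∀ {x : F}, x ∈ o → ∀ i j, nmM x i j ∈ o := fun hx i j => by
    fin_cases i <;> fin_cases j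
    exacts [o.one_mem, o.zero_mem, hx, o.one_mem]
  refine ⟨hentries hu, nmM (-u), hentries (neg_mem hu), ?_, ?_⟩ <;>
    simp [nmM_mul_nmM, nmM_zero]

theorem mul_nmM_one_zero (g : Matrix (Fin 2) (Fin 2) F) (u : F) :
    (g * nmM u) 1 0 = g 1 0 + g 1 1 * u := by
  simp [nmM, Matrix.mul_apply, Fin.sum_univ_two]

theorem mul_nmM_one_one (g : Matrix (Fin 2) (Fin 2) F) (u : F) : (g * nmM u) 1 1 = g 1 1 := by
  simp [nmM, Matrix.mul_apply, Fin.sum_univ_two]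

end Matrices

section Coordinates

variable {F E : Type*} [Field F] [Field E] [Algebra F E] {β : E}

theorem coords_unique (hβ : ∀ r : F, algebraMap F E r ≠ β) {s t s' t' : F}
    (h : algebraMap F E s + algebraMap F E t * β = algebraMap F E s' + algebraMap F E t' * β) :
    s = s' ∧ t = t' := by
  obtain rfl : t = t' := by
    by_contra htt
    apply hβ ((s - s') / (t' - t))
    have : algebraMap F E (t' - t) ≠ 0 := by simpa [sub_eq_zero] using Ne.symm htt
    rw [map_div₀, div_eq_iff this, map_sub, map_sub]
    linear_combination h
  exact ⟨(algebraMap F E).injective (by simpa using h), rfl⟩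

structure IsQuadraticIntegralBasis (o : ValuationSubring F) (O : ValuationSubring E) (β : E)
    (a b : F) : Prop where
  mem_iff : ∀ x : F, x ∈ o ↔ algebraMap F E x ∈ O
  β_mem : β ∈ O
  β_ne : ∀ r : F, algebraMap F E r ≠ β
  exists_coords : ∀ z ∈ O, ∃ x y : F, x ∈ o ∧ y ∈ o ∧
    z = algebraMap F E x + algebraMap F E y * β
  a_mem : a ∈ o
  b_mem : b ∈ o
  inv_a_mem : a⁻¹ ∈ o
  a_ne_zero : a ≠ 0
  minpoly : β ^ 2 - algebraMap F E b * β + algebraMap F E a = 0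

def IsStandardEmbedding (β : E) (ι₀ : E →+* Matrix (Fin 2) (Fin 2) F) : Prop :=
  ∀ x : E, ∀ j : Fin 2, x * (![β, 1] j) = ∑ i : Fin 2, (![β, 1] i) * algebraMap F E (ι₀ x i j)

theorem iota_apply {β : E} {a b : F} (hβ : ∀ r : F, algebraMap F E r ≠ β)
    (hmin : β ^ 2 - algebraMap F E b * β + algebraMap F E a = 0)
    {ι₀ : E →+* Matrix (Fin 2) (Fin 2) F}
    (hι₀ : IsStandardEmbedding β ι₀)
    (s t : F) : ι₀ (algebraMap F E s + algebraMap F E t * β) = !![s + t * b, t; -(t * a), s] := by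
  have h0 := hι₀ (algebraMap F E s + algebraMap F E t * β) 0
  have h1 := hι₀ (algebraMap F E s + algebraMap F E t * β) 1
  set M := ι₀ (algebraMap F E s + algebraMap F E t * β)
  simp only [Fin.sum_univ_two, Matrix.cons_val_zero, Matrix.cons_val_one, mul_one,
    one_mul] at h0 h1
  have c0 : algebraMap F E (-(t * a)) + algebraMap F E (s + t * b) * β
      = algebraMap F E (M 1 0) + algebraMap F E (M 0 0) * β := by
    simp only [map_neg, map_mul, map_add]
    linear_combination h0 - algebraMap F E t * hmin
  have c1 : algebraMap F E s + algebraMap F E t * β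
      = algebraMap F E (M 1 1) + algebraMap F E (M 0 1) * β := by
    linear_combination h1
  obtain ⟨e10, e00⟩ := coords_unique hβ c0
  obtain ⟨e11, e01⟩ := coords_unique hβ c1
  rw [Matrix.eta_fin_two M, ← e00, ← e01, ← e10, ← e11]

end Coordinates

section RowCoordinate

variable {F E : Type*} [Field F] [Field E] [Algebra F E]

/-- `x - yβ̄` for the bottom row `(x, y)` of `g`, where `β̄ = b - β`. -/
def rowE (b : F) (β : E) (g : Matrix (Fin 2) (Fin 2) F) : E :=
  algebraMap F E (g 1 0) + algebraMap F E (g 1 1) * (β - algebraMap F E b)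

variable {β : E} {a b : F}

theorem rowE_eq_coords (g : Matrix (Fin 2) (Fin 2) F) :
    rowE b β g = algebraMap F E (g 1 0 - g 1 1 * b) + algebraMap F E (g 1 1) * β := by
  simp only [rowE, map_sub, map_mul]; ring

theorem rowE_injective (hβ : ∀ r : F, algebraMap F E r ≠ β) {g g' : Matrix (Fin 2) (Fin 2) F}
    (h : rowE b β g = rowE b β g') : g 1 0 = g' 1 0 ∧ g 1 1 = g' 1 1 := by
  rw [rowE_eq_coords, rowE_eq_coords] at h
  obtain ⟨h0, h1⟩ := coords_unique hβ h
  exact ⟨by linear_combination h0 + b * h1, h1⟩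

theorem rowE_mul_nmM (g : Matrix (Fin 2) (Fin 2) F) (u : F) :
    rowE b β (g * nmM u) =
      algebraMap F E (g 1 0) + algebraMap F E (g 1 1) * rowE b β (nmM u) := by
  rw [rowE, rowE, mul_nmM_one_zero, mul_nmM_one_one]
  simp only [nmM, Matrix.of_apply, Matrix.cons_val', Matrix.cons_val_zero, Matrix.cons_val_one,
    Matrix.cons_val_fin_one, map_add, map_mul, map_one]
  ring

theorem rowE_mul_iota (hβ : ∀ r : F, algebraMap F E r ≠ β)
    (hmin : β ^ 2 - algebraMap F E b * β + algebraMap F E a = 0)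
    {ι₀ : E →+* Matrix (Fin 2) (Fin 2) F}
    (hι₀ : IsStandardEmbedding β ι₀)
    (g : Matrix (Fin 2) (Fin 2) F) (s t : F) :
    rowE b β (g * ι₀ (algebraMap F E s + algebraMap F E t * β)) =
      rowE b β g * (algebraMap F E s + algebraMap F E t * β) := by
  rw [iota_apply hβ hmin hι₀]
  simp only [rowE, Matrix.mul_apply, Fin.sum_univ_two, Matrix.of_apply, Matrix.cons_val',
    Matrix.cons_val_zero, Matrix.cons_val_one, Matrix.empty_val', Matrix.cons_val_fin_one,
    map_add, map_mul, map_neg]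
  linear_combination (-(algebraMap F E (g 1 1) * algebraMap F E t)) * hmin

end RowCoordinate

section Integrality

variable {F E : Type*} [Field F] [Field E] [Algebra F E] {o : ValuationSubring F}
  {O : ValuationSubring E} {ϖ : F} {c : ℕ}

theorem valuation_algebraMap_le_one_iff (hcomp : ∀ x : F, x ∈ o ↔ algebraMap F E x ∈ O)
    {x : F} : O.valuation (algebraMap F E x) ≤ 1 ↔ x ∈ o :=
  (O.valuation_le_one_iff _).trans (hcomp x).symm

theorem valuation_algebraMap_eq_one_iff (hcomp : ∀ x : F, x ∈ o ↔ algebraMap F E x ∈ O)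
    {x : F} : O.valuation (algebraMap F E x) = 1 ↔ x ∈ Ox o := by
  rw [← mem_Ox_iff_valuation_eq_one]
  constructor
  · rintro ⟨hx, w, hw, hxw⟩
    have hx0 : x ≠ 0 := by rintro rfl; simp at hxw
    have hw' : w = algebraMap F E x⁻¹ := by
      rw [map_inv₀]; exact eq_inv_of_mul_eq_one_right hxw
    exact ⟨(hcomp x).2 hx, x⁻¹, (hcomp _).2 (hw' ▸ hw), mul_inv_cancel₀ hx0⟩
  · rintro ⟨hx, w, hw, hxw⟩
    exact ⟨(hcomp x).1 hx, algebraMap F E w, (hcomp w).1 hw, by rw [← map_mul, hxw, map_one]⟩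

theorem valuation_bottom_row_eq_one (hcomp : ∀ x : F, x ∈ o ↔ algebraMap F E x ∈ O)
    {g : Matrix (Fin 2) (Fin 2) F} (hg : g ∈ GLo o) :
    O.valuation (algebraMap F E (g 1 0)) = 1 ∨ O.valuation (algebraMap F E (g 1 1)) = 1 := by
  obtain ⟨hge, g', hg'e, hgg', -⟩ := hg
  have det_mem : ∀ M : Matrix (Fin 2) (Fin 2) F, (∀ i j, M i j ∈ o) → M.det ∈ o := fun M hM => by
    rw [Matrix.det_fin_two]
    exact sub_mem (mul_mem (hM 0 0) (hM 1 1)) (mul_mem (hM 0 1) (hM 1 0))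
  have hdet : O.valuation (algebraMap F E g.det) = 1 :=
    (valuation_algebraMap_eq_one_iff hcomp).2
      ⟨det_mem g hge, g'.det, det_mem g' hg'e, by rw [← Matrix.det_mul, hgg', Matrix.det_one]⟩
  have hle : ∀ i j, O.valuation (algebraMap F E (g i j)) ≤ 1 := fun i j =>
    (valuation_algebraMap_le_one_iff hcomp).2 (hge i j)
  by_contra! hlt
  have h10 := lt_of_le_of_ne (hle 1 0) hlt.1
  have h11 := lt_of_le_of_ne (hle 1 1) hlt.2
  rw [Matrix.det_fin_two, map_sub, map_mul, map_mul] at hdet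
  refine ((Valuation.map_sub _ _ _).trans_lt (max_lt ?_ ?_)).ne hdet <;>
    rw [map_mul, mul_comm]
  exacts [mul_lt_one_of_lt_of_le h11 (hle 0 0), mul_lt_one_of_lt_of_le h10 (hle 0 1)]


theorem valuation_lt_one_of_mem_K0 (hcomp : ∀ x : F, x ∈ o ↔ algebraMap F E x ∈ O)
    (hϖ : O.valuation (algebraMap F E ϖ) < 1) (hc : 1 ≤ c) {k : Matrix (Fin 2) (Fin 2) F}
    (hk : k ∈ K0 o ϖ c) : O.valuation (algebraMap F E (k 1 0)) < 1 := by
  obtain ⟨-, d, hd, hkd⟩ := hk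
  rw [hkd, map_mul, map_mul, map_pow, map_pow]
  exact mul_lt_one_of_lt_of_le (pow_lt_one₀ zero_le hϖ (Nat.one_le_iff_ne_zero.1 hc))
    ((valuation_algebraMap_le_one_iff hcomp).2 hd)

theorem valuation_rowE_mul_nmM_lt_one (hcomp : ∀ x : F, x ∈ o ↔ algebraMap F E x ∈ O)
    (hϖ : O.valuation (algebraMap F E ϖ) < 1) (hc : 1 ≤ c) {k : Matrix (Fin 2) (Fin 2) F}
    (hk : k ∈ K0 o ϖ c) {b u : F} {β : E} (hu : O.valuation (rowE b β (nmM u)) < 1) :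
    O.valuation (rowE b β (k * nmM u)) < 1 := by
  rw [rowE_mul_nmM]
  refine (Valuation.map_add _ _ _).trans_lt
    (max_lt (valuation_lt_one_of_mem_K0 hcomp hϖ hc hk) ?_)
  rw [map_mul, mul_comm]
  exact mul_lt_one_of_lt_of_le hu ((valuation_algebraMap_le_one_iff hcomp).2 (hk.1.1 1 1))

end Integrality

namespace IsQuadraticIntegralBasis

variable {F E : Type*} [Field F] [Field E] [Algebra F E] {o : ValuationSubring F}
  {O : ValuationSubring E} {β : E} {a b : F} {ι₀ : E →+* Matrix (Fin 2) (Fin 2) F}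

theorem rowE_mul_iota_of_mem (h : IsQuadraticIntegralBasis o O β a b)
    (hι₀ : IsStandardEmbedding β ι₀) (g : Matrix (Fin 2) (Fin 2) F) {t : E} (ht : t ∈ O) :
    rowE b β (g * ι₀ t) = rowE b β g * t := by
  obtain ⟨p, q, -, -, rfl⟩ := h.exists_coords t ht
  exact rowE_mul_iota h.β_ne h.minpoly hι₀ g p q

theorem iota_mem_GLo (h : IsQuadraticIntegralBasis o O β a b) (hι₀ : IsStandardEmbedding β ι₀)
    {t : E} (ht : t ∈ Ox O) : ι₀ t ∈ GLo o := by
  have hentries : ∀ z ∈ O, ∀ i j, ι₀ z i j ∈ o := by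
    intro z hz i j
    obtain ⟨p, q, hp, hq, rfl⟩ := h.exists_coords z hz
    rw [iota_apply h.β_ne h.minpoly hι₀]
    fin_cases i <;> fin_cases j
    exacts [add_mem hp (mul_mem hq h.b_mem), hq, neg_mem (mul_mem hq h.a_mem), hp]
  obtain ⟨htO, w, hwO, htw⟩ := ht
  exact ⟨hentries t htO, ι₀ w, hentries w hwO, by rw [← map_mul, htw, map_one],
    by rw [← map_mul, mul_comm, htw, map_one]⟩

theorem valuation_coords_le (h : IsQuadraticIntegralBasis o O β a b) {s t r : F}
    (hle : O.valuation (algebraMap F E s + algebraMap F E t * β) ≤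
      O.valuation (algebraMap F E r)) :
    O.valuation (algebraMap F E s) ≤ O.valuation (algebraMap F E r) ∧
      O.valuation (algebraMap F E t) ≤ O.valuation (algebraMap F E r) := by
  obtain ⟨c, hc⟩ := (O.valuation_le_iff _ _).1 hle
  obtain ⟨p, q, hp, hq, hpq⟩ := h.exists_coords c c.2
  rw [hpq] at hc
  obtain ⟨hs, ht⟩ := coords_unique h.β_ne (s := p * r) (t := q * r) (by
    rw [← hc]; simp only [map_mul]; ring)
  have hmul_le : ∀ {x : F}, x ∈ o →
      O.valuation (algebraMap F E (x * r)) ≤ O.valuation (algebraMap F E r) := fun hx => by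
    rw [map_mul, map_mul]
    exact mul_le_of_le_one_left' ((valuation_algebraMap_le_one_iff h.mem_iff).2 hx)
  exact ⟨hs ▸ hmul_le hp, ht ▸ hmul_le hq⟩

theorem valuation_lt_valuation_rowE (h : IsQuadraticIntegralBasis o O β a b) {ϖ : F}
    (hϖ : O.valuation (algebraMap F E ϖ) < 1) {g : Matrix (Fin 2) (Fin 2) F} (hg : g ∈ GLo o) :
    O.valuation (algebraMap F E ϖ) < O.valuation (rowE b β g) := by
  by_contra! hle
  rw [rowE_eq_coords] at hle
  obtain ⟨hx, hy⟩ := h.valuation_coords_le hle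
  have hy' : O.valuation (algebraMap F E (g 1 1)) < 1 := hy.trans_lt hϖ
  have hx' : O.valuation (algebraMap F E (g 1 0)) < 1 := by
    rw [show g 1 0 = (g 1 0 - g 1 1 * b) + g 1 1 * b by ring, map_add]
    refine (Valuation.map_add _ _ _).trans_lt (max_lt (hx.trans_lt hϖ) ?_)
    rw [map_mul]
    exact mul_lt_one_of_lt_of_le hy' ((valuation_algebraMap_le_one_iff h.mem_iff).2 h.b_mem)
  rcases valuation_bottom_row_eq_one h.mem_iff hg with h1 | h1
  exacts [hx'.ne h1, hy'.ne h1]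

theorem valuation_β_sub_b (h : IsQuadraticIntegralBasis o O β a b) :
    O.valuation (β - algebraMap F E b) = 1 := by
  refine (mem_Ox_iff_valuation_eq_one O).1 ⟨sub_mem h.β_mem ((h.mem_iff b).1 h.b_mem),
    -(β * algebraMap F E a⁻¹), neg_mem (mul_mem h.β_mem ((h.mem_iff _).1 h.inv_a_mem)), ?_⟩
  have ha : algebraMap F E a * algebraMap F E a⁻¹ = 1 := by
    rw [← map_mul, mul_inv_cancel₀ h.a_ne_zero, map_one]
  linear_combination ha - algebraMap F E a⁻¹ * h.minpoly

theorem valuation_rowE_le_one (h : IsQuadraticIntegralBasis o O β a b)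
    {g : Matrix (Fin 2) (Fin 2) F} (hg : ∀ i j, g i j ∈ o) : O.valuation (rowE b β g) ≤ 1 :=
  (O.valuation_le_one_iff _).2 <| add_mem ((h.mem_iff _).1 (hg 1 0))
    (mul_mem ((h.mem_iff _).1 (hg 1 1)) (sub_mem h.β_mem ((h.mem_iff b).1 h.b_mem)))

theorem valuation_rowE_of_mem_K0 (h : IsQuadraticIntegralBasis o O β a b) {ϖ : F}
    (hϖ : O.valuation (algebraMap F E ϖ) < 1) {c : ℕ} (hc : 1 ≤ c)
    {k : Matrix (Fin 2) (Fin 2) F} (hk : k ∈ K0 o ϖ c) : O.valuation (rowE b β k) = 1 := by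
  have h10 := valuation_lt_one_of_mem_K0 h.mem_iff hϖ hc hk
  have h11 := (valuation_bottom_row_eq_one h.mem_iff hk.1).resolve_left h10.ne
  have hunit : O.valuation (algebraMap F E (k 1 1) * (β - algebraMap F E b)) = 1 := by
    rw [map_mul, h11, h.valuation_β_sub_b, one_mul]
  rw [rowE, Valuation.map_add_eq_of_lt_right _ (h10.trans_eq hunit.symm), hunit]

theorem exists_mem_K0_of_rowE_eq (h : IsQuadraticIntegralBasis o O β a b)
    (hι₀ : IsStandardEmbedding β ι₀) (ϖ : F) (c : ℕ) {g : Matrix (Fin 2) (Fin 2) F}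
    (hg : g ∈ GLo o) {u : F} (hu : u ∈ o) {t : E} (ht : t ∈ Ox O)
    (hgt : rowE b β g = rowE b β (nmM u) * t) :
    ∃ k ∈ K0 o ϖ c, ∃ t ∈ Ox O, g = k * nmM u * ι₀ t := by
  obtain ⟨htO, w, hwO, htw⟩ := ht
  have hw : w ∈ Ox O := ⟨hwO, t, htO, by rw [mul_comm, htw]⟩
  have hrow : rowE b β (g * ι₀ w) = rowE b β (nmM u) := by
    rw [h.rowE_mul_iota_of_mem hι₀ g hwO, hgt, mul_assoc, htw, mul_one]
  obtain ⟨h10, h11⟩ := rowE_injective h.β_ne hrow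
  refine ⟨g * ι₀ w * nmM (-u), ⟨GLo_mul (GLo_mul hg (h.iota_mem_GLo hι₀ hw))
    (nmM_mem_GLo (neg_mem hu)), 0, o.zero_mem, ?_⟩, t, ⟨htO, w, hwO, htw⟩, ?_⟩
  · rw [mul_nmM_one_zero, h10, h11]
    simp [nmM]
  · rw [mul_assoc _ (nmM (-u)), nmM_mul_nmM, neg_add_cancel, nmM_zero, mul_one, mul_assoc,
      ← map_mul, mul_comm w, htw, map_one, mul_one]

theorem valuation_rowE_mul_iota (h : IsQuadraticIntegralBasis o O β a b)
    (hι₀ : IsStandardEmbedding β ι₀) (g : Matrix (Fin 2) (Fin 2) F) {t : E} (ht : t ∈ Ox O) :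
    O.valuation (rowE b β (g * ι₀ t)) = O.valuation (rowE b β g) := by
  rw [h.rowE_mul_iota_of_mem hι₀ g ht.1, map_mul, (mem_Ox_iff_valuation_eq_one O).1 ht, mul_one]

theorem mem_K0_mul_iota_iff (h : IsQuadraticIntegralBasis o O β a b)
    (hι₀ : IsStandardEmbedding β ι₀) {ϖ : F} (hϖ : O.valuation (algebraMap F E ϖ) < 1)
    {c : ℕ} (hc : 1 ≤ c) (g : Matrix (Fin 2) (Fin 2) F) :
    (∃ k ∈ K0 o ϖ c, ∃ t ∈ Ox O, g = k * ι₀ t) ↔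
      g ∈ GLo o ∧ O.valuation (rowE b β g) = 1 := by
  constructor
  · rintro ⟨k, hk, t, ht, rfl⟩
    exact ⟨GLo_mul hk.1 (h.iota_mem_GLo hι₀ ht),
      (h.valuation_rowE_mul_iota hι₀ k ht).trans (h.valuation_rowE_of_mem_K0 hϖ hc hk)⟩
  · rintro ⟨hg, hv⟩
    have hv₀ : O.valuation (rowE b β g) = O.valuation (rowE b β (nmM 0)) := by
      rw [hv, nmM_zero, rowE]
      simpa using h.valuation_β_sub_b.symm
    obtain ⟨t, ht, hgt⟩ := exists_mem_Ox_mul_eq_of_valuation_eq O hv₀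
    simpa only [nmM_zero, mul_one] using h.exists_mem_K0_of_rowE_eq hι₀ ϖ c hg o.zero_mem ht hgt

theorem valuation_rowE_nmM_lt_one (h : IsQuadraticIntegralBasis o O β a b) {ϖ : F}
    (hϖ : O.valuation (algebraMap F E ϖ) < 1) {u : F} (hu : u ∈ o)
    (hd : ∃ d ∈ o, a - b * u + u ^ 2 = ϖ * d) : O.valuation (rowE b β (nmM u)) < 1 := by
  obtain ⟨d, hd, hud⟩ := hd
  refine lt_of_le_of_ne (h.valuation_rowE_le_one (nmM_mem_GLo hu).1) fun h1 => ?_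
  have hconj : (algebraMap F E (-u) + algebraMap F E 1 * β) * rowE b β (nmM u) =
      algebraMap F E (-(ϖ * d)) := by
    rw [← hud]
    simp only [rowE, nmM, Matrix.of_apply, Matrix.cons_val', Matrix.cons_val_zero,
      Matrix.cons_val_one, Matrix.empty_val', Matrix.cons_val_fin_one, map_neg, map_one,
      map_add, map_sub, map_mul, map_pow]
    linear_combination h.minpoly
  have hle : O.valuation (algebraMap F E (-u) + algebraMap F E 1 * β) ≤
      O.valuation (algebraMap F E ϖ) := by
    rw [← mul_one (O.valuation (algebraMap F E (-u) + _)), ← h1, ← map_mul, hconj, map_neg,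
      Valuation.map_neg, map_mul, map_mul]
    exact mul_le_of_le_one_right' ((valuation_algebraMap_le_one_iff h.mem_iff).2 hd)
  have h1le := (h.valuation_coords_le hle).2
  rw [map_one, map_one] at h1le
  exact h1le.not_gt hϖ

theorem mem_K0_mul_nmM_mul_iota_iff (h : IsQuadraticIntegralBasis o O β a b)
    (hι₀ : IsStandardEmbedding β ι₀) {ϖ : F} (hϖ : O.valuation (algebraMap F E ϖ) < 1)
    {c : ℕ} (hc : 1 ≤ c) [IsDiscreteValuationRing O] {π : O} (hπ : Irreducible π)
    (hϖπ : O.valuation (algebraMap F E ϖ) = O.valuation (π : E) ^ 2) {u : F} (hu : u ∈ o)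
    (hu₁ : O.valuation (rowE b β (nmM u)) < 1) (g : Matrix (Fin 2) (Fin 2) F) :
    (∃ k ∈ K0 o ϖ c, ∃ t ∈ Ox O, g = k * nmM u * ι₀ t) ↔
      g ∈ GLo o ∧ O.valuation (rowE b β g) < 1 := by
  constructor
  · rintro ⟨k, hk, t, ht, rfl⟩
    refine ⟨GLo_mul (GLo_mul hk.1 (nmM_mem_GLo hu)) (h.iota_mem_GLo hι₀ ht), ?_⟩
    rw [h.valuation_rowE_mul_iota hι₀ _ ht]
    exact valuation_rowE_mul_nmM_lt_one h.mem_iff hϖ hc hk hu₁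
  · rintro ⟨hg, hv⟩
    have hvπ : ∀ {g'}, g' ∈ GLo o → O.valuation (rowE b β g') < 1 →
        O.valuation (rowE b β g') = O.valuation (π : E) := fun hg' hv' =>
      valuation_eq_of_irreducible hπ hv' (hϖπ ▸ h.valuation_lt_valuation_rowE hϖ hg')
    obtain ⟨t, ht, hgt⟩ := exists_mem_Ox_mul_eq_of_valuation_eq O
      ((hvπ hg hv).trans (hvπ (nmM_mem_GLo hu) hu₁).symm)
    exact h.exists_mem_K0_of_rowE_eq hι₀ ϖ c hg hu ht hgt

end IsQuadraticIntegralBasis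

theorem stmt_15_general {F E : Type*} [Field F] [Field E] [Algebra F E]
    (o : ValuationSubring F)
    (O : ValuationSubring E) [IsDiscreteValuationRing O]
    (hcomp : ∀ x : F, x ∈ o ↔ algebraMap F E x ∈ O)
    (ϖ : F) (hϖo : ϖ ∈ o) (hϖ : Irreducible (⟨ϖ, hϖo⟩ : o))
    (β : E) (hβO : β ∈ O) (hβno : ¬ ∃ x ∈ o, β = algebraMap F E x)
    (hOgen : ∀ z ∈ O, ∃ x y : F, x ∈ o ∧ y ∈ o ∧
      z = algebraMap F E x + algebraMap F E y * β)
    (a b : F) (hao : a ∈ o) (hbo : b ∈ o) (hau : a⁻¹ ∈ o) (hane : a ≠ 0)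
    (hmin : β ^ 2 - algebraMap F E b * β + algebraMap F E a = 0)
    (ι₀ : E →+* Matrix (Fin 2) (Fin 2) F)
    (hι₀ : ∀ x : E, ∀ j : Fin 2,
      x * (![β, 1] j) = ∑ i : Fin 2, (![β, 1] i) * algebraMap F E (ι₀ x i j))
    (c : ℕ) (hc : 1 ≤ c) :
    -- unramified case
    (Irreducible (⟨algebraMap F E ϖ, (hcomp ϖ).1 hϖo⟩ : O) →
      ∀ g : Matrix (Fin 2) (Fin 2) F,
        g ∈ GLo o ↔ ∃ k ∈ K0 o ϖ c, ∃ t ∈ Ox O, g = k * ι₀ t) ∧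
    -- ramified case
    (∀ ϖE : O, Irreducible ϖE →
      Associated (⟨algebraMap F E ϖ, (hcomp ϖ).1 hϖo⟩ : O) (ϖE ^ 2) →
      ∀ u₀ : F, u₀ ∈ o → u₀⁻¹ ∈ o → u₀ ≠ 0 →
        (β - algebraMap F E u₀ ∈ O ∧
          ¬ ∃ w ∈ O, (β - algebraMap F E u₀) * w = 1) →
        (∃ d ∈ o, a - b * u₀ + u₀ ^ 2 = ϖ * d) →
        (¬ ∃ d ∈ o, a - b * u₀ + u₀ ^ 2 = ϖ ^ 2 * d) →
        ((∀ g : Matrix (Fin 2) (Fin 2) F,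
            g ∈ GLo o ↔
              ((∃ k ∈ K0 o ϖ c, ∃ t ∈ Ox O, g = k * ι₀ t) ∨
                (∃ k ∈ K0 o ϖ c, ∃ t ∈ Ox O, g = k * nmM u₀ * ι₀ t))) ∧
          Disjoint {g : Matrix (Fin 2) (Fin 2) F | ∃ k ∈ K0 o ϖ c, ∃ t ∈ Ox O,
              g = k * ι₀ t}
            {g : Matrix (Fin 2) (Fin 2) F | ∃ k ∈ K0 o ϖ c, ∃ t ∈ Ox O,
              g = k * nmM u₀ * ι₀ t})) := by
  have h : IsQuadraticIntegralBasis o O β a b :=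
    ⟨hcomp, hβO, fun r hr => hβno ⟨r, (hcomp r).2 (hr ▸ hβO), hr.symm⟩, hOgen, hao, hbo, hau,
      hane, hmin⟩
  have hϖv : O.valuation (algebraMap F E ϖ) < 1 :=
    lt_of_le_of_ne ((valuation_algebraMap_le_one_iff hcomp).2 hϖo) fun h1 => by
      obtain ⟨-, w, hw, hϖw⟩ := (valuation_algebraMap_eq_one_iff hcomp).1 h1
      exact hϖ.not_isUnit (IsUnit.of_mul_eq_one ⟨w, hw⟩ (Subtype.ext hϖw))
  have hcoset₁ := h.mem_K0_mul_iota_iff hι₀ hϖv hc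
  refine ⟨fun hirr g => ?_, fun ϖE hϖE hass u₀ hu₀ _ _ _ hd _ => ?_⟩
  · rw [hcoset₁]
    exact ⟨fun hg => ⟨hg, valuation_eq_one_of_irreducible hirr (h.valuation_rowE_le_one hg.1)
      (h.valuation_lt_valuation_rowE hϖv hg)⟩, And.left⟩
  have hϖπ : O.valuation (algebraMap F E ϖ) = O.valuation (ϖE : E) ^ 2 := by
    rw [← map_pow]; exact valuation_eq_of_associated O hass
  have hcoset₂ := h.mem_K0_mul_nmM_mul_iota_iff hι₀ hϖv hc hϖE hϖπ hu₀
    (h.valuation_rowE_nmM_lt_one hϖv hu₀ hd)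
  refine ⟨fun g => ?_, Set.disjoint_left.2 fun g h₁ h₂ => ?_⟩
  · rw [hcoset₁, hcoset₂]
    refine ⟨fun hg => ?_, by rintro (hg | hg) <;> exact hg.1⟩
    exact (h.valuation_rowE_le_one hg.1).eq_or_lt.imp (⟨hg, ·⟩) (⟨hg, ·⟩)
  · exact ((hcoset₂ g).1 h₂).2.ne ((hcoset₁ g).1 h₁).2

/-- Let `c ≥ 1`.  If `E/F` is unramified then
`GL₂(𝔬) = K₀(𝔭^c)·ι₀(𝒪^×)`.  If `E/F` is ramified then
`GL₂(𝔬) = K₀(𝔭^c)·ι₀(𝒪^×) ⊔ K₀(𝔭^c)·n₋(u₀)·ι₀(𝒪^×)` (a disjoint union), where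
`u₀ ∈ 𝔬 ∖ 𝔭` satisfies `u₀ ≡ β (mod 𝒫)` and `𝐚 − 𝐛u₀ + u₀² ∈ 𝔭 ∖ 𝔭²`.
In both cases the decomposition is independent of `c ≥ 1`. -/
theorem stmt_15 {F E : Type*} [Field F] [Field E] [Algebra F E]
    (o : ValuationSubring F) [IsDiscreteValuationRing o]
    (O : ValuationSubring E) [IsDiscreteValuationRing O]
    (hcomp : ∀ x : F, x ∈ o ↔ algebraMap F E x ∈ O)
    (ϖ : F) (hϖo : ϖ ∈ o) (hϖ : Irreducible (⟨ϖ, hϖo⟩ : o))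
    (β : E) (hβO : β ∈ O) (hβno : ¬ ∃ x ∈ o, β = algebraMap F E x)
    (hOgen : ∀ z ∈ O, ∃ x y : F, x ∈ o ∧ y ∈ o ∧
      z = algebraMap F E x + algebraMap F E y * β)
    (hquad : ∀ z : E, ∃ s t : F, z = algebraMap F E s + algebraMap F E t * β)
    (a b : F) (hao : a ∈ o) (hbo : b ∈ o) (hau : a⁻¹ ∈ o) (hane : a ≠ 0)
    (hmin : β ^ 2 - algebraMap F E b * β + algebraMap F E a = 0)
    (ι₀ : E →+* Matrix (Fin 2) (Fin 2) F)
    (hι₀ : ∀ x : E, ∀ j : Fin 2,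
      x * (![β, 1] j) = ∑ i : Fin 2, (![β, 1] i) * algebraMap F E (ι₀ x i j))
    (c : ℕ) (hc : 1 ≤ c) :
    -- unramified case
    (Irreducible (⟨algebraMap F E ϖ, (hcomp ϖ).1 hϖo⟩ : O) →
      ∀ g : Matrix (Fin 2) (Fin 2) F,
        g ∈ GLo o ↔ ∃ k ∈ K0 o ϖ c, ∃ t ∈ Ox O, g = k * ι₀ t) ∧
    -- ramified case
    (∀ ϖE : O, Irreducible ϖE →
      Associated (⟨algebraMap F E ϖ, (hcomp ϖ).1 hϖo⟩ : O) (ϖE ^ 2) →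
      ∀ u₀ : F, u₀ ∈ o → u₀⁻¹ ∈ o → u₀ ≠ 0 →
        (β - algebraMap F E u₀ ∈ O ∧
          ¬ ∃ w ∈ O, (β - algebraMap F E u₀) * w = 1) →
        (∃ d ∈ o, a - b * u₀ + u₀ ^ 2 = ϖ * d) →
        (¬ ∃ d ∈ o, a - b * u₀ + u₀ ^ 2 = ϖ ^ 2 * d) →
        ((∀ g : Matrix (Fin 2) (Fin 2) F,
            g ∈ GLo o ↔
              ((∃ k ∈ K0 o ϖ c, ∃ t ∈ Ox O, g = k * ι₀ t) ∨
                (∃ k ∈ K0 o ϖ c, ∃ t ∈ Ox O, g = k * nmM u₀ * ι₀ t))) ∧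
          Disjoint {g : Matrix (Fin 2) (Fin 2) F | ∃ k ∈ K0 o ϖ c, ∃ t ∈ Ox O,
              g = k * ι₀ t}
            {g : Matrix (Fin 2) (Fin 2) F | ∃ k ∈ K0 o ϖ c, ∃ t ∈ Ox O,
              g = k * nmM u₀ * ι₀ t})) :=
  stmt_15_general o O hcomp ϖ hϖo hϖ β hβO hβno hOgen a b hao hbo hau hane hmin ι₀ hι₀ c hc
end

section
/- Let E/F be a quadratic field extension, z ∈ 𝔬^×, and s, r ∈ ℕ. Then a(zϖ^s)·ι₀(E)·a(ϖ^r)^{−1} ∩ M₂(𝔬) = a(zϖ^s)·ι₀(ϖ^{r−s}𝒪_s)·a(ϖ^r)^{−1} if r ≥ s, and a(zϖ^s)·ι₀(E)·a(ϖ^r)^{−1} ∩ M₂(𝔬) = a(zϖ^s)·ι₀(𝒪_r)·a(ϖ^r)^{−1} if r < s. -/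
/-- `M₂(𝔬)`: matrices with entries in `𝔬`. -/
def Mo {F : Type*} [Field F] (o : ValuationSubring F) :
    Set (Matrix (Fin 2) (Fin 2) F) :=
  {g | ∀ i j, g i j ∈ o}

section Representation

variable {F E : Type*} [Field F] [Field E] [Algebra F E] {β : E}

theorem algebraMap_add_mul_inj (hβ : β ∉ Set.range (algebraMap F E)) {u v u' v' : F}
    (h : algebraMap F E u + algebraMap F E v * β = algebraMap F E u' + algebraMap F E v' * β) :
    u = u' ∧ v = v' := by
  have hinj := (algebraMap F E).injective
  by_cases hv : v = v'
  · subst hv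
    exact ⟨hinj (add_right_cancel h), rfl⟩
  · refine absurd ⟨(u' - u) / (v - v'), ?_⟩ hβ
    have hv' : algebraMap F E (v - v') ≠ 0 := (map_ne_zero _).2 (sub_ne_zero.2 hv)
    rw [map_div₀, div_eq_iff hv', map_sub, map_sub]
    linear_combination -h

theorem apply_algebraMap_add_mul_eq (hβ : β ∉ Set.range (algebraMap F E)) {a b : F}
    (hmin : β ^ 2 - algebraMap F E b * β + algebraMap F E a = 0)
    {ι₀ : E → Matrix (Fin 2) (Fin 2) F}
    (hι₀ : ∀ x : E, ∀ j : Fin 2,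
      x * (![β, 1] j) = ∑ i : Fin 2, (![β, 1] i) * algebraMap F E (ι₀ x i j))
    (u v : F) :
    ι₀ (algebraMap F E u + algebraMap F E v * β) = !![u + v * b, v; -(v * a), u] := by
  set t := algebraMap F E u + algebraMap F E v * β
  have h0 := hι₀ t 0
  have h1 := hι₀ t 1
  simp only [Fin.sum_univ_two, Matrix.cons_val_zero, Matrix.cons_val_one, mul_one,
    one_mul] at h0 h1
  obtain ⟨h11, h01⟩ := algebraMap_add_mul_inj hβ (u := ι₀ t 1 1) (v := ι₀ t 0 1)
    (u' := u) (v' := v) (by linear_combination -h1)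
  obtain ⟨h10, h00⟩ := algebraMap_add_mul_inj hβ (u := ι₀ t 1 0) (v := ι₀ t 0 0)
    (u' := -(v * a)) (v' := u + v * b) (by
      simp only [t, map_neg, map_mul, map_add] at h0 ⊢
      linear_combination -h0 + algebraMap F E v * hmin)
  ext i j
  fin_cases i <;> fin_cases j <;> simp [h00, h01, h10, h11]

end Representation

theorem aM_mul_mul_aM {F : Type*} [Field F] (A : Matrix (Fin 2) (Fin 2) F) (c d : F) :
    aM c * A * aM d = !![c * A 0 0 * d, c * A 0 1; A 1 0 * d, A 1 1] := by
  ext i j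
  fin_cases i <;> fin_cases j <;>
    simp [aM, Matrix.mul_apply, Matrix.vecMul, Fin.sum_univ_two, dotProduct]

section Integrality

variable {F : Type*} [Field F] {o : ValuationSubring F}

theorem aM_mul_mul_aM_mem_Mo_iff {a b z c d : F} (hao : a ∈ o) (hbo : b ∈ o) (hau : a⁻¹ ∈ o)
    (hane : a ≠ 0) (hz : z ∈ o) (hzinv : z⁻¹ ∈ o) (hzne : z ≠ 0) (hc : c ∈ o) (hd : d ∈ o)
    (hdne : d ≠ 0) (u y : F) :
    aM (z * c) * !![u + d * y * b, d * y; -(d * y * a), u] * aM d⁻¹ ∈ Mo o ↔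
      u ∈ o ∧ y ∈ o ∧ c * u * d⁻¹ ∈ o := by
  have e00 : z * c * (u + d * y * b) * d⁻¹ = z * (c * u * d⁻¹ + c * y * b) := by
    field_simp
  have e10 : -(d * y * a) * d⁻¹ = -(y * a) := by
    field_simp
  simp only [aM_mul_mul_aM, Mo, Set.mem_ofPred_eq, Fin.forall_fin_two, Matrix.of_apply,
    Matrix.cons_val', Matrix.cons_val_zero, Matrix.cons_val_one,
    Matrix.empty_val', Matrix.cons_val_fin_one, e00, e10, neg_mem_iff]
  constructor
  · rintro ⟨⟨h00, -⟩, h10, hu⟩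
    have hy : y ∈ o := by
      simpa [hane] using mul_mem h10 hau
    refine ⟨hu, hy, ?_⟩
    have hcu : c * u * d⁻¹ = z⁻¹ * (z * (c * u * d⁻¹ + c * y * b)) - c * y * b := by
      field_simp
      ring
    rw [hcu]
    exact sub_mem (mul_mem hzinv h00) (mul_mem (mul_mem hc hy) hbo)
  · rintro ⟨hu, hy, hcu⟩
    exact ⟨⟨mul_mem hz (add_mem hcu (mul_mem (mul_mem hc hy) hbo)),
      mul_mem (mul_mem hz hc) (mul_mem hd hy)⟩, mul_mem hy hao, hu⟩

variable {E : Type*} [Field E] [Algebra F E] {β : E}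

theorem aM_mul_mul_aM_mem_Mo_iff_exists (hβ : β ∉ Set.range (algebraMap F E))
    (hquad : ∀ w : E, ∃ x y : F, w = algebraMap F E x + algebraMap F E y * β)
    {a b : F} (hao : a ∈ o) (hbo : b ∈ o) (hau : a⁻¹ ∈ o) (hane : a ≠ 0)
    (hmin : β ^ 2 - algebraMap F E b * β + algebraMap F E a = 0)
    {ι₀ : E → Matrix (Fin 2) (Fin 2) F}
    (hι₀ : ∀ x : E, ∀ j : Fin 2,
      x * (![β, 1] j) = ∑ i : Fin 2, (![β, 1] i) * algebraMap F E (ι₀ x i j))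
    {z c d : F} (hz : z ∈ o) (hzinv : z⁻¹ ∈ o) (hzne : z ≠ 0) (hc : c ∈ o) (hd : d ∈ o)
    (hdne : d ≠ 0) (t : E) :
    aM (z * c) * ι₀ t * aM d⁻¹ ∈ Mo o ↔ ∃ u y, u ∈ o ∧ y ∈ o ∧ c * u * d⁻¹ ∈ o ∧
      t = algebraMap F E u + algebraMap F E (d * y) * β := by
  have hmem := aM_mul_mul_aM_mem_Mo_iff hao hbo hau hane hz hzinv hzne hc hd hdne
  constructor
  · intro ht
    obtain ⟨u, v, rfl⟩ := hquad t
    have hv : v = d * (v / d) := (mul_div_cancel₀ v hdne).symm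
    rw [hv, apply_algebraMap_add_mul_eq hβ hmin hι₀, hmem] at ht
    exact ⟨u, v / d, ht.1, ht.2.1, ht.2.2, by rw [← hv]⟩
  · rintro ⟨u, y, hu, hy, hcu, rfl⟩
    rw [apply_algebraMap_add_mul_eq hβ hmin hι₀, hmem]
    exact ⟨hu, hy, hcu⟩

variable {ϖ : F} {s r : ℕ}

theorem exists_eq_iff_exists_mem_OrE_of_le (hϖo : ϖ ∈ o) (hϖne : ϖ ≠ 0) (hsr : s ≤ r) (t : E) :
    (∃ u y, u ∈ o ∧ y ∈ o ∧ ϖ ^ s * u * (ϖ ^ r)⁻¹ ∈ o ∧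
      t = algebraMap F E u + algebraMap F E (ϖ ^ r * y) * β) ↔
    ∃ t' ∈ OrE o ϖ β s, t = algebraMap F E (ϖ ^ (r - s)) * t' := by
  have hpow : ϖ ^ r = ϖ ^ (r - s) * ϖ ^ s := by rw [← pow_add, Nat.sub_add_cancel hsr]
  constructor
  · rintro ⟨u, y, -, hy, hx, rfl⟩
    refine ⟨_, ⟨_, y, hx, hy, rfl⟩, ?_⟩
    have hu : ϖ ^ (r - s) * (ϖ ^ s * u * (ϖ ^ r)⁻¹) = u := by
      rw [hpow]
      field_simp
    rw [mul_add, ← map_mul, hu, ← mul_assoc, ← map_mul, ← mul_assoc, ← hpow]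
  · rintro ⟨_, ⟨x, y, hx, hy, rfl⟩, rfl⟩
    refine ⟨ϖ ^ (r - s) * x, y, mul_mem (pow_mem hϖo _) hx, hy, ?_, ?_⟩
    · have hx' : ϖ ^ s * (ϖ ^ (r - s) * x) * (ϖ ^ r)⁻¹ = x := by
        rw [hpow]
        field_simp
      rwa [hx']
    · rw [hpow]
      simp only [map_mul]
      ring

theorem exists_eq_iff_mem_OrE_of_lt (hϖo : ϖ ∈ o) (hϖne : ϖ ≠ 0) (hrs : r < s) (t : E) :
    (∃ u y, u ∈ o ∧ y ∈ o ∧ ϖ ^ s * u * (ϖ ^ r)⁻¹ ∈ o ∧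
      t = algebraMap F E u + algebraMap F E (ϖ ^ r * y) * β) ↔ t ∈ OrE o ϖ β r := by
  have hpow : ϖ ^ s * (ϖ ^ r)⁻¹ = ϖ ^ (s - r) := by
    rw [← pow_sub₀ _ hϖne hrs.le]
  constructor
  · rintro ⟨u, y, hu, hy, -, rfl⟩
    exact ⟨u, y, hu, hy, rfl⟩
  · rintro ⟨x, y, hx, hy, rfl⟩
    refine ⟨x, y, hx, hy, ?_, rfl⟩
    rw [mul_right_comm, hpow]
    exact mul_mem (pow_mem hϖo _) hx

end Integrality

theorem setOf_exists_eq_inter_eq {α γ δ : Type*} {f : α → γ} {g : δ → α} {M : Set γ}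
    {S : Set δ} (h : ∀ t, f t ∈ M ↔ ∃ t' ∈ S, t = g t') :
    {m | ∃ t, m = f t} ∩ M = {m | ∃ t ∈ S, m = f (g t)} := by
  ext m
  constructor
  · rintro ⟨⟨t, rfl⟩, hm⟩
    obtain ⟨t', ht', rfl⟩ := (h t).1 hm
    exact ⟨t', ht', rfl⟩
  · rintro ⟨t', ht', rfl⟩
    exact ⟨⟨_, rfl⟩, (h _).2 ⟨t', ht', rfl⟩⟩

theorem stmt_16_general {F E : Type*} [Field F] [Field E] [Algebra F E]
    (o : ValuationSubring F)
    (O : ValuationSubring E)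
    (hcomp : ∀ x : F, x ∈ o ↔ algebraMap F E x ∈ O)
    (ϖ : F) (hϖo : ϖ ∈ o) (hϖ : Irreducible (⟨ϖ, hϖo⟩ : o))
    (β : E) (hβO : β ∈ O) (hβno : ¬ ∃ x ∈ o, β = algebraMap F E x)
    (hquad : ∀ w : E, ∃ x y : F, w = algebraMap F E x + algebraMap F E y * β)
    (a b : F) (hao : a ∈ o) (hbo : b ∈ o) (hau : a⁻¹ ∈ o) (hane : a ≠ 0)
    (hmin : β ^ 2 - algebraMap F E b * β + algebraMap F E a = 0)
    (ι₀ : E →+* Matrix (Fin 2) (Fin 2) F)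
    (hι₀ : ∀ x : E, ∀ j : Fin 2,
      x * (![β, 1] j) = ∑ i : Fin 2, (![β, 1] i) * algebraMap F E (ι₀ x i j))
    (z : F) (hz : z ∈ o) (hzinv : z⁻¹ ∈ o) (hzne : z ≠ 0) (s r : ℕ) :
    (s ≤ r →
      {m : Matrix (Fin 2) (Fin 2) F | ∃ t : E,
          m = aM (z * ϖ ^ s) * ι₀ t * aM ((ϖ ^ r)⁻¹)} ∩ Mo o =
        {m | ∃ t ∈ OrE o ϖ β s,
          m = aM (z * ϖ ^ s) * ι₀ (algebraMap F E (ϖ ^ (r - s)) * t) *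
            aM ((ϖ ^ r)⁻¹)}) ∧
    (r < s →
      {m : Matrix (Fin 2) (Fin 2) F | ∃ t : E,
          m = aM (z * ϖ ^ s) * ι₀ t * aM ((ϖ ^ r)⁻¹)} ∩ Mo o =
        {m | ∃ t ∈ OrE o ϖ β r,
          m = aM (z * ϖ ^ s) * ι₀ t * aM ((ϖ ^ r)⁻¹)}) := by
  have hβ : β ∉ Set.range (algebraMap F E) := by
    rintro ⟨x, rfl⟩
    exact hβno ⟨x, (hcomp x).2 hβO, rfl⟩
  have hϖne : ϖ ≠ 0 := fun h => hϖ.ne_zero (Subtype.ext h)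
  have hmem := aM_mul_mul_aM_mem_Mo_iff_exists hβ hquad hao hbo hau hane hmin hι₀ hz hzinv hzne
    (pow_mem hϖo s) (pow_mem hϖo r) (pow_ne_zero r hϖne)
  refine ⟨fun hsr => setOf_exists_eq_inter_eq fun t => ?_,
    fun hrs => setOf_exists_eq_inter_eq (g := id) fun t => ?_⟩
  · rw [hmem, exists_eq_iff_exists_mem_OrE_of_le hϖo hϖne hsr]
  · rw [hmem, exists_eq_iff_mem_OrE_of_lt hϖo hϖne hrs]
    simp only [id, exists_eq_right']

/-- Let `z ∈ 𝔬^×` and `s, r ∈ ℕ`.  Then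
`a(zϖ^s)·ι₀(E)·a(ϖ^r)^{−1} ∩ M₂(𝔬) = a(zϖ^s)·ι₀(ϖ^{r−s}𝒪_s)·a(ϖ^r)^{−1}` if
`r ≥ s`, and `a(zϖ^s)·ι₀(E)·a(ϖ^r)^{−1} ∩ M₂(𝔬) = a(zϖ^s)·ι₀(𝒪_r)·a(ϖ^r)^{−1}`
if `r < s`. -/
theorem stmt_16 {F E : Type*} [Field F] [Field E] [Algebra F E]
    (o : ValuationSubring F) [IsDiscreteValuationRing o]
    (O : ValuationSubring E) [IsDiscreteValuationRing O]
    (hcomp : ∀ x : F, x ∈ o ↔ algebraMap F E x ∈ O)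
    (ϖ : F) (hϖo : ϖ ∈ o) (hϖ : Irreducible (⟨ϖ, hϖo⟩ : o))
    (β : E) (hβO : β ∈ O) (hβno : ¬ ∃ x ∈ o, β = algebraMap F E x)
    (hOgen : ∀ w ∈ O, ∃ x y : F, x ∈ o ∧ y ∈ o ∧
      w = algebraMap F E x + algebraMap F E y * β)
    (hquad : ∀ w : E, ∃ x y : F, w = algebraMap F E x + algebraMap F E y * β)
    (a b : F) (hao : a ∈ o) (hbo : b ∈ o) (hau : a⁻¹ ∈ o) (hane : a ≠ 0)
    (hmin : β ^ 2 - algebraMap F E b * β + algebraMap F E a = 0)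
    (ι₀ : E →+* Matrix (Fin 2) (Fin 2) F)
    (hι₀ : ∀ x : E, ∀ j : Fin 2,
      x * (![β, 1] j) = ∑ i : Fin 2, (![β, 1] i) * algebraMap F E (ι₀ x i j))
    (z : F) (hz : z ∈ o) (hzinv : z⁻¹ ∈ o) (hzne : z ≠ 0) (s r : ℕ) :
    (s ≤ r →
      {m : Matrix (Fin 2) (Fin 2) F | ∃ t : E,
          m = aM (z * ϖ ^ s) * ι₀ t * aM ((ϖ ^ r)⁻¹)} ∩ Mo o =
        {m | ∃ t ∈ OrE o ϖ β s,
          m = aM (z * ϖ ^ s) * ι₀ (algebraMap F E (ϖ ^ (r - s)) * t) *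
            aM ((ϖ ^ r)⁻¹)}) ∧
    (r < s →
      {m : Matrix (Fin 2) (Fin 2) F | ∃ t : E,
          m = aM (z * ϖ ^ s) * ι₀ t * aM ((ϖ ^ r)⁻¹)} ∩ Mo o =
        {m | ∃ t ∈ OrE o ϖ β r,
          m = aM (z * ϖ ^ s) * ι₀ t * aM ((ϖ ^ r)⁻¹)}) :=
  stmt_16_general o O hcomp ϖ hϖo hϖ β hβO hβno hquad a b hao hbo hau hane hmin ι₀ hι₀ z hz hzinv
    hzne s r
end

section
/- For every integer r ≥ 1: ∫_{ℝ} ∫_{ℝ^{r−1}} |z|^{r(r+1)/2 − 1} · (∏_{j=1}^{r−1} |a_j|^{j−1}) · exp(−z²(1 + ∑_{j=1}^{r−1} a_j²)) da₁⋯da_{r−1} dz = ∏_{j=1}^{r} Γ(j/2), where the integrals are with respect to Lebesgue measure and Γ is the Gamma function. -/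
/-!
For fixed `z ≠ 0` the inner integrand factors over the coordinates, and each factor is a
Gaussian moment `∫ |a|^k e^{-z²a²} da = Γ((k+1)/2) / |z|^{k+1}`. These moments use up
`r(r-1)/2` powers of `|z|`, leaving `∏_{j<r} Γ(j/2) · |z|^{r-1} e^{-z²}`, and the outer
integral supplies the last factor `Γ(r/2)`.
-/

open MeasureTheory

theorem integral_abs_pow_mul_exp_neg_mul_sq (n : ℕ) {b : ℝ} (hb : 0 < b) :
    ∫ x : ℝ, |x| ^ n * Real.exp (-b * x ^ 2) =
      b ^ (-((n : ℝ) + 1) / 2) * Real.Gamma (((n : ℝ) + 1) / 2) := by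
  have hsym : ∀ x : ℝ, |x| ^ n * Real.exp (-b * x ^ 2) =
      (fun t : ℝ => t ^ n * Real.exp (-b * t ^ 2)) |x| := fun x => by simp only [sq_abs]
  have hIoi : ∀ x ∈ Set.Ioi (0 : ℝ), x ^ n * Real.exp (-b * x ^ 2) =
      x ^ (n : ℝ) * Real.exp (-b * x ^ (2 : ℝ)) := fun x _ => by
    rw [Real.rpow_natCast, Real.rpow_two]
  rw [integral_congr_ae (.of_forall hsym),
    integral_comp_abs (f := fun t => t ^ n * Real.exp (-b * t ^ 2)),
    setIntegral_congr_fun measurableSet_Ioi hIoi,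
    integral_rpow_mul_exp_neg_mul_rpow two_pos (by linarith [n.cast_nonneg (α := ℝ)]) hb]
  ring

theorem integral_abs_pow_mul_exp_neg_sq_mul_sq (n : ℕ) {z : ℝ} (hz : z ≠ 0) :
    ∫ x : ℝ, |x| ^ n * Real.exp (-(z ^ 2) * x ^ 2) =
      Real.Gamma (((n : ℝ) + 1) / 2) / |z| ^ (n + 1) := by
  have habs : 0 < |z| := abs_pos.mpr hz
  have hpow : (z ^ 2) ^ (-((n : ℝ) + 1) / 2) = (|z| ^ (n + 1))⁻¹ := by
    rw [← sq_abs, ← Real.rpow_natCast_mul habs.le, ← Real.rpow_natCast,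
      ← Real.rpow_neg habs.le]
    push_cast
    ring_nf
  rw [integral_abs_pow_mul_exp_neg_mul_sq n (by positivity), hpow, inv_mul_eq_div]

theorem integral_prod_abs_pow_mul_exp_neg_sq_mul_sum_sq {ι : Type*} [Fintype ι] (k : ι → ℕ)
    {z : ℝ} (hz : z ≠ 0) :
    ∫ a : ι → ℝ, (∏ i, |a i| ^ k i) * Real.exp (-(z ^ 2) * ∑ i, a i ^ 2) =
      (∏ i, Real.Gamma (((k i : ℝ) + 1) / 2)) / |z| ^ (∑ i, (k i + 1)) := by
  have hsplit : ∀ a : ι → ℝ, (∏ i, |a i| ^ k i) * Real.exp (-(z ^ 2) * ∑ i, a i ^ 2) =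
      ∏ i, |a i| ^ k i * Real.exp (-(z ^ 2) * a i ^ 2) := fun a => by
    rw [Finset.mul_sum, Real.exp_sum, Finset.prod_mul_distrib]
  simp only [hsplit, volume_pi]
  rw [integral_fintype_prod_eq_prod (fun i x => |x| ^ k i * Real.exp (-(z ^ 2) * x ^ 2))]
  simp only [integral_abs_pow_mul_exp_neg_sq_mul_sq _ hz, Finset.prod_div_distrib,
    Finset.prod_pow_eq_pow_sum]

theorem integral_mul_prod_abs_pow_mul_exp_neg_sq_mul_one_add_sum_sq {ι : Type*} [Fintype ι]
    (c : ℝ) (k : ι → ℕ) {z : ℝ} (hz : z ≠ 0) :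
    ∫ a : ι → ℝ, c * (∏ i, |a i| ^ k i) * Real.exp (-(z ^ 2) * (1 + ∑ i, a i ^ 2)) =
      c * Real.exp (-(z ^ 2)) * (∏ i, Real.Gamma (((k i : ℝ) + 1) / 2)) /
        |z| ^ (∑ i, (k i + 1)) := by
  have hsplit : ∀ a : ι → ℝ,
      c * (∏ i, |a i| ^ k i) * Real.exp (-(z ^ 2) * (1 + ∑ i, a i ^ 2)) =
        c * Real.exp (-(z ^ 2)) * ((∏ i, |a i| ^ k i) * Real.exp (-(z ^ 2) * ∑ i, a i ^ 2)) :=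
    fun a => by rw [mul_one_add, Real.exp_add]; ring
  simp only [hsplit]
  rw [integral_const_mul, integral_prod_abs_pow_mul_exp_neg_sq_mul_sum_sq k hz, mul_div_assoc]

theorem sum_fin_val_add_one (n : ℕ) : ∑ j : Fin n, ((j : ℕ) + 1) = (n + 1) * n / 2 := by
  have h := Finset.sum_range_succ' (fun i => i) n
  rw [Finset.sum_range_id, add_zero] at h
  rw [Fin.sum_univ_eq_sum_range (fun j => j + 1), ← h, Nat.add_sub_cancel]

theorem prod_Icc_one_eq_prod_fin {M : Type*} [CommMonoid M] (f : ℕ → M) (n : ℕ) :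
    ∏ j ∈ Finset.Icc 1 n, f j = ∏ j : Fin n, f (j + 1) := by
  rw [Fin.prod_univ_eq_prod_range (fun j => f (j + 1)), Finset.range_eq_Ico, Finset.prod_Ico_add']
  rfl

/-- For every integer `r ≥ 1`,
`∫_ℝ ∫_{ℝ^{r−1}} |z|^{r(r+1)/2 − 1} · (∏_{j=1}^{r−1} |a_j|^{j−1}) ·
  exp(−z²(1 + ∑_{j=1}^{r−1} a_j²)) da dz = ∏_{j=1}^{r} Γ(j/2)`.
Here the variables `a_j` for `j = 1, …, r−1` are indexed by `Fin (r-1)` (so that the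
exponent `j − 1` becomes the natural number underlying the index), the integrals are
with respect to Lebesgue measure, and `Γ` is the Gamma function. -/
theorem stmt_18 (r : ℕ) (hr : 1 ≤ r) :
    (∫ z : ℝ, ∫ a : Fin (r - 1) → ℝ,
        |z| ^ (r * (r + 1) / 2 - 1) * (∏ j : Fin (r - 1), |a j| ^ (j : ℕ)) *
          Real.exp (-(z ^ 2) * (1 + ∑ j : Fin (r - 1), (a j) ^ 2))) =
      ∏ j ∈ Finset.Icc 1 r, Real.Gamma ((j : ℝ) / 2) := by
  obtain ⟨n, rfl⟩ := Nat.exists_eq_add_of_le' hr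
  set N := (n + 1) * (n + 1 + 1) / 2 - 1 with hN_def
  change (∫ z : ℝ, ∫ a : Fin n → ℝ, |z| ^ N * (∏ j : Fin n, |a j| ^ (j : ℕ)) *
      Real.exp (-(z ^ 2) * (1 + ∑ j : Fin n, (a j) ^ 2))) = _
  set C := ∏ j : Fin n, Real.Gamma (((j : ℕ) + 1) / 2)
  have hN : N = ∑ j : Fin n, ((j : ℕ) + 1) + n := by
    rw [hN_def, sum_fin_val_add_one,
      show (n + 1) * (n + 1 + 1) = (n + 1) * n + 2 * (n + 1) by ring]
    omega
  have hinner : ∀ z : ℝ, z ≠ 0 → ∫ a : Fin n → ℝ, |z| ^ N * (∏ j : Fin n, |a j| ^ (j : ℕ)) *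
      Real.exp (-(z ^ 2) * (1 + ∑ j : Fin n, (a j) ^ 2)) =
      C * (|z| ^ n * Real.exp (-1 * z ^ 2)) := fun z hz => by
    have habs : |z| ≠ 0 := abs_ne_zero.mpr hz
    rw [integral_mul_prod_abs_pow_mul_exp_neg_sq_mul_one_add_sum_sq _ _ hz, hN, pow_add]
    field_simp
    rfl
  calc _ = ∫ z : ℝ, C * (|z| ^ n * Real.exp (-1 * z ^ 2)) :=
        integral_congr_ae ((Measure.ae_ne volume 0).mono hinner)
    _ = C * Real.Gamma (((n : ℝ) + 1) / 2) := by
        rw [integral_const_mul, integral_abs_pow_mul_exp_neg_mul_sq n one_pos, Real.one_rpow,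
          one_mul]
    _ = ∏ j ∈ Finset.Icc 1 (n + 1), Real.Gamma ((j : ℝ) / 2) := by
        rw [prod_Icc_one_eq_prod_fin, Fin.prod_univ_castSucc]
        push_cast
        rfl
end
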